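/- arXiv:1806.01173 — 7 statements merged into one kernel-verified Lean document; each statement's English description precedes it below -/
import Mathlib

section
/- The dual of the MaxCut SDP, namely min{ ⟨𝟙, y⟩ : Diag(y) − C ⪰ 0, y ∈ ℝⁿ }, has a unique optimal solution for every symmetric matrix C ∈ Sym(n). -/
/-!
Every feasible `y` satisfies `y ≥ diag C`, a large multiple of `𝟙` is feasible, and the feasible
set is closed, so `⟨𝟙, y⟩` attains its minimum.

If `y` is optimal, then for every `i` some `x ∈ ker (Diag y − C)` has `xᵢ ≠ 0`: otherwise `eᵢ` is
orthogonal to the kernel, hence `eᵢ = (Diag y − C) w`, Cauchy–Schwarz for the form of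
`Diag y − C` gives `ε xᵢ² ≤ xᵀ (Diag y − C) x` for some `ε > 0`, and `y − ε eᵢ` would be a
cheaper feasible point. If `y` and `y'` are both optimal, so is their midpoint `z`, and
`Diag z − C = ½ ((Diag y − C) + (Diag y' − C))`; a kernel vector `x` of `Diag z − C` with
`xᵢ ≠ 0` is therefore in the kernels of both summands, and comparing the `i`-th entries gives
`yᵢ xᵢ = y'ᵢ xᵢ`.
-/

open Matrix

namespace Matrix

variable {ι : Type*} [Fintype ι]

theorem dotProduct_mulVec_le_sum_abs_mul (C : Matrix ι ι ℝ) (x : ι → ℝ) :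
    x ⬝ᵥ C *ᵥ x ≤ (∑ i, ∑ j, |C i j|) * ∑ k, x k ^ 2 := by
  have hsq (i : ι) : x i ^ 2 ≤ ∑ k, x k ^ 2 :=
    Finset.single_le_sum (f := fun k => x k ^ 2) (fun k _ => sq_nonneg _) (Finset.mem_univ i)
  calc x ⬝ᵥ C *ᵥ x = ∑ i, ∑ j, x i * (C i j * x j) := by
        simp only [dotProduct, mulVec, Finset.mul_sum]
    _ ≤ ∑ i, ∑ j, |C i j| * ∑ k, x k ^ 2 := by
        refine Finset.sum_le_sum fun i _ => Finset.sum_le_sum fun j _ => ?_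
        calc x i * (C i j * x j) ≤ |C i j| * (|x i| * |x j|) := by
              rw [← abs_mul, ← abs_mul, mul_left_comm]; exact le_abs_self _
          _ ≤ |C i j| * ∑ k, x k ^ 2 := by
              gcongr
              nlinarith [sq_abs (x i), sq_abs (x j), hsq i, hsq j, abs_nonneg (x i),
                abs_nonneg (x j)]
    _ = (∑ i, ∑ j, |C i j|) * ∑ k, x k ^ 2 := by simp only [Finset.sum_mul]

theorem PosSemidef.mulVec_eq_zero_of_add_mulVec_eq_zero {A B : Matrix ι ι ℝ} (hA : A.PosSemidef)
    (hB : B.PosSemidef) {x : ι → ℝ} (hx : (A + B) *ᵥ x = 0) : A *ᵥ x = 0 := by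
  have hqA := hA.dotProduct_mulVec_nonneg x
  have hqB := hB.dotProduct_mulVec_nonneg x
  have hsum : star x ⬝ᵥ A *ᵥ x + star x ⬝ᵥ B *ᵥ x = 0 := by
    rw [← dotProduct_add, ← add_mulVec, hx, dotProduct_zero]
  exact (hA.dotProduct_mulVec_zero_iff x).mp (by linarith)

variable [DecidableEq ι]

theorem IsSymm.exists_mulVec_eq_of_forall_mulVec_eq_zero {K : Type*} [Field K]
    {S : Matrix ι ι K} (hS : S.IsSymm) {v : ι → K} (hv : ∀ x, S *ᵥ x = 0 → x ⬝ᵥ v = 0) :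
    ∃ w, S *ᵥ w = v := by
  suffices v ∈ LinearMap.range S.mulVecLin from this
  rw [← Subspace.forall_mem_dualAnnihilator_apply_eq_zero_iff]
  intro φ hφ
  obtain ⟨u, rfl⟩ := (dotProductEquiv K ι).surjective φ
  have hu : S *ᵥ u = 0 := by
    ext k
    have := (Submodule.mem_dualAnnihilator _).mp hφ _ (LinearMap.mem_range_self _ (Pi.single k 1))
    rw [← hS, mulVec_transpose]
    simp only [mulVecBilin_apply, mulVec_single, MulOpposite.op_one, one_smul,
      dotProductEquiv_apply_apply] at this
    exact this
  simpa using hv u hu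

theorem PosSemidef.exists_pos_mul_sq_le {S : Matrix ι ι ℝ} (hS : S.PosSemidef) {v : ι → ℝ}
    (hv : ∀ x, S *ᵥ x = 0 → x ⬝ᵥ v = 0) :
    ∃ ε > 0, ∀ x, ε * (x ⬝ᵥ v) ^ 2 ≤ x ⬝ᵥ S *ᵥ x := by
  have hsymm : S.IsSymm := by simpa using hS.isHermitian
  have hq : ∀ x, 0 ≤ x ⬝ᵥ S *ᵥ x := by simpa using hS.dotProduct_mulVec_nonneg
  obtain ⟨w, rfl⟩ := hsymm.exists_mulVec_eq_of_forall_mulVec_eq_zero hv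
  -- the `+ 1` keeps `ε` positive when `w ⬝ᵥ S *ᵥ w = 0`
  refine ⟨(w ⬝ᵥ S *ᵥ w + 1)⁻¹, by positivity [hq w], fun x => ?_⟩
  have hcs := (toBilin' S).apply_mul_apply_le_of_forall_zero_le
    (by simpa only [toBilin'_apply'] using hq) x w
  simp only [toBilin'_apply'] at hcs
  have hsw : x ⬝ᵥ S *ᵥ w = w ⬝ᵥ S *ᵥ x := by
    rw [dotProduct_mulVec x, ← mulVec_transpose, hsymm, dotProduct_comm]
  rw [← hsw, ← sq, mul_comm (x ⬝ᵥ S *ᵥ x)] at hcs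
  rw [inv_mul_le_iff₀ (by positivity [hq w])]
  nlinarith [hq x]

theorem dotProduct_diagonal_mulVec {R : Type*} [CommSemiring R] (d x : ι → R) :
    x ⬝ᵥ diagonal d *ᵥ x = ∑ i, d i * x i ^ 2 := by
  simp only [dotProduct, mulVec_diagonal]
  exact Finset.sum_congr rfl fun i _ => by ring

end Matrix

theorem IsClosed.exists_isMinOn_sum {ι : Type*} [Fintype ι] {F : Set (ι → ℝ)} (hF : IsClosed F)
    (hne : F.Nonempty) {a : ι → ℝ} (ha : ∀ y ∈ F, a ≤ y) :
    ∃ y ∈ F, IsMinOn (fun y => ∑ i, y i) F y := by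
  obtain ⟨y₀, hy₀⟩ := hne
  refine (continuous_finsetSum _ fun i _ => continuous_apply i).continuousOn.exists_isMinOn' hF
    hy₀ ?_
  rw [(Filter.hasBasis_cocompact.inf_principal F).eventually_iff]
  refine ⟨Set.univ.pi fun i => Set.Icc (a i) (a i + (∑ j, y₀ j - ∑ j, a j)),
    isCompact_univ_pi fun _ => isCompact_Icc, ?_⟩
  rintro y ⟨hyK, hyF⟩
  simp only [Set.mem_compl_iff, Set.mem_pi, Set.mem_univ, forall_const, Set.mem_Icc,
    not_forall] at hyK
  obtain ⟨i, hi⟩ := hyK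
  replace hi : a i + (∑ j, y₀ j - ∑ j, a j) < y i := lt_of_not_ge fun h => hi ⟨ha y hyF i, h⟩
  have : y i - a i ≤ ∑ j, (y j - a j) :=
    Finset.single_le_sum (f := fun j => y j - a j) (fun j _ => sub_nonneg.mpr (ha y hyF j))
      (Finset.mem_univ i)
  rw [Finset.sum_sub_distrib] at this
  linarith

namespace MaxCut

variable {ι : Type*} [DecidableEq ι] {C : Matrix ι ι ℝ}

def dualFeasible (C : Matrix ι ι ℝ) : Set (ι → ℝ) := {y | (diagonal y - C).PosSemidef}

theorem diag_le_of_mem_dualFeasible {y : ι → ℝ} (hy : y ∈ dualFeasible C) : C.diag ≤ y :=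
  fun i => by simpa using hy.diag_nonneg (i := i)

variable [Fintype ι]

theorem mem_dualFeasible_iff (hC : C.IsSymm) {y : ι → ℝ} :
    y ∈ dualFeasible C ↔ ∀ x, x ⬝ᵥ C *ᵥ x ≤ ∑ i, y i * x i ^ 2 := by
  have hH : (diagonal y - C).IsHermitian :=
    isHermitian_iff_isSymm.mpr ((isSymm_diagonal y).sub hC)
  simp only [dualFeasible, Set.mem_ofPred_eq, posSemidef_iff_dotProduct_mulVec, hH, true_and,
    star_trivial, sub_mulVec, dotProduct_sub, dotProduct_diagonal_mulVec, sub_nonneg]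

theorem dualFeasible_nonempty (hC : C.IsSymm) : (dualFeasible C).Nonempty :=
  ⟨fun _ => ∑ i, ∑ j, |C i j|, (mem_dualFeasible_iff hC).mpr fun x => by
    simpa only [← Finset.mul_sum] using dotProduct_mulVec_le_sum_abs_mul C x⟩

theorem isClosed_dualFeasible (hC : C.IsSymm) : IsClosed (dualFeasible C) := by
  have : dualFeasible C = ⋂ x, {y | x ⬝ᵥ C *ᵥ x ≤ ∑ i, y i * x i ^ 2} := by
    ext y
    simp only [mem_dualFeasible_iff hC, Set.mem_iInter, Set.mem_ofPred_eq]
  rw [this]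
  exact isClosed_iInter fun x => isClosed_le continuous_const (by fun_prop)

theorem exists_isMinOn_dualFeasible (hC : C.IsSymm) :
    ∃ y ∈ dualFeasible C, IsMinOn (fun y => ∑ i, y i) (dualFeasible C) y :=
  (isClosed_dualFeasible hC).exists_isMinOn_sum (dualFeasible_nonempty hC)
    fun _ => diag_le_of_mem_dualFeasible

theorem sub_single_mem_dualFeasible (hC : C.IsSymm) {y : ι → ℝ} {i : ι} {ε : ℝ}
    (h : ∀ x, ε * x i ^ 2 ≤ x ⬝ᵥ (diagonal y - C) *ᵥ x) :
    y - Pi.single i ε ∈ dualFeasible C := by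
  refine (mem_dualFeasible_iff hC).mpr fun x => ?_
  have := h x
  rw [sub_mulVec, dotProduct_sub, dotProduct_diagonal_mulVec] at this
  simp only [Pi.sub_apply, Pi.single_apply, sub_mul, ite_mul, zero_mul, Finset.sum_sub_distrib,
    Finset.sum_ite_eq', Finset.mem_univ, if_true]
  linarith

theorem exists_mulVec_eq_zero_apply_ne_zero (hC : C.IsSymm) {y : ι → ℝ}
    (hy : y ∈ dualFeasible C) (hmin : IsMinOn (fun y => ∑ i, y i) (dualFeasible C) y) (i : ι) :
    ∃ x, (diagonal y - C) *ᵥ x = 0 ∧ x i ≠ 0 := by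
  by_contra! h
  obtain ⟨ε, hε, hq⟩ := PosSemidef.exists_pos_mul_sq_le hy (v := Pi.single i 1)
    fun x hx => by simpa using h x hx
  have h_lower : ∑ j, y j ≤ ∑ j, (y - Pi.single i ε : ι → ℝ) j :=
    hmin (sub_single_mem_dualFeasible hC (by simpa using hq))
  simp only [Pi.sub_apply, Finset.sum_sub_distrib, Finset.sum_pi_single', Finset.mem_univ,
    if_true] at h_lower
  linarith

theorem eq_of_isMinOn_dualFeasible (hC : C.IsSymm) {y y' : ι → ℝ} (hy : y ∈ dualFeasible C)
    (hy' : y' ∈ dualFeasible C) (hmin : IsMinOn (fun y => ∑ i, y i) (dualFeasible C) y)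
    (hmin' : IsMinOn (fun y => ∑ i, y i) (dualFeasible C) y') : y = y' := by
  set z : ι → ℝ := (2 : ℝ)⁻¹ • (y + y')
  have hS : diagonal z - C = (2 : ℝ)⁻¹ • ((diagonal y - C) + (diagonal y' - C)) := by
    rw [diagonal_smul, show diagonal (y + y') = diagonal y + diagonal y' from
      (diagonal_add y y').symm]
    module
  have hz : z ∈ dualFeasible C := by
    rw [dualFeasible, Set.mem_ofPred_eq, hS]
    exact (hy.add hy').smul (by norm_num)
  have hzmin : IsMinOn (fun y => ∑ i, y i) (dualFeasible C) z := isMinOn_iff.mpr fun w hw => by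
    have h : ∑ i, y i ≤ ∑ i, w i := hmin hw
    have h' : ∑ i, y' i ≤ ∑ i, w i := hmin' hw
    simp only [z, Pi.smul_apply, Pi.add_apply, smul_eq_mul, ← Finset.mul_sum,
      Finset.sum_add_distrib] at h h' ⊢
    linarith
  funext i
  obtain ⟨x, hx, hxi⟩ := exists_mulVec_eq_zero_apply_ne_zero hC hz hzmin i
  have hsum : ((diagonal y - C) + (diagonal y' - C)) *ᵥ x = 0 := by
    rw [hS, smul_mulVec] at hx
    exact (smul_eq_zero.mp hx).resolve_left (by norm_num)
  have h := congrFun ((hy.mulVec_eq_zero_of_add_mulVec_eq_zero hy' hsum).trans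
    (hy'.mulVec_eq_zero_of_add_mulVec_eq_zero hy (by rwa [add_comm])).symm) i
  simp only [sub_mulVec, Pi.sub_apply, mulVec_diagonal, sub_left_inj] at h
  exact mul_right_cancel₀ hxi h

end MaxCut

/-- The dual of the MaxCut SDP, `min { ⟨𝟙, y⟩ : Diag(y) − C ⪰ 0 }`, has a unique
optimal solution for every symmetric matrix `C`. -/
theorem maxCut_dual_unique_optimal (n : ℕ) (C : Matrix (Fin n) (Fin n) ℝ)
    (hC : C.IsSymm) :
    ∃! y : Fin n → ℝ,
      (Matrix.diagonal y - C).PosSemidef ∧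
        ∀ y' : Fin n → ℝ, (Matrix.diagonal y' - C).PosSemidef →
          (∑ i, y i) ≤ (∑ i, y' i) := by
  obtain ⟨y, hy, hmin⟩ := MaxCut.exists_isMinOn_dualFeasible hC
  exact ⟨y, ⟨hy, hmin⟩, fun y' ⟨hy', hmin'⟩ =>
    MaxCut.eq_of_isMinOn_dualFeasible hC hy' hy hmin' hmin⟩
end

section
/- A point X of the elliptope ℰ_n = {X ∈ Sym(n) : X ⪰ 0, diag(X) = 𝟙} is a vertex of ℰ_n (i.e., its normal cone at X is full-dimensional in Sym(n)) if and only if X = x xᵀ for some x ∈ {−1, +1}ⁿ. -/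
open Matrix

/-- The subspace of symmetric matrices. -/
def symmetricSubmodule (n : ℕ) : Submodule ℝ (Matrix (Fin n) (Fin n) ℝ) where
  carrier := {A | A.IsSymm}
  add_mem' := by
    intro A B hA hB
    simp only [Set.mem_setOf_eq, Matrix.IsSymm, Matrix.transpose_add] at *
    rw [hA, hB]
  zero_mem' := by simp [Matrix.IsSymm]
  smul_mem' := by
    intro c A hA
    simp only [Set.mem_setOf_eq, Matrix.IsSymm, Matrix.transpose_smul] at *
    rw [hA]

/-- The elliptope. -/
def elliptope (n : ℕ) : Set (Matrix (Fin n) (Fin n) ℝ) :=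
  {X | X.PosSemidef ∧ ∀ i, X i i = 1}

/-- The normal cone (within the space of symmetric matrices) of the elliptope at `X`. -/
def elliptopeNormalCone (n : ℕ) (X : Matrix (Fin n) (Fin n) ℝ) :
    Set (Matrix (Fin n) (Fin n) ℝ) :=
  {A | A.IsSymm ∧ ∀ Y ∈ elliptope n, (A * Y).trace ≤ (A * X).trace}

/-! Viewing `X` as a Gram matrix, rotating its `i`-th Gram vector towards a unit vector `V z`
orthogonal to it traces a curve `P X Pᵀ` in the elliptope whose tangent at `X` is
`eᵢ pᵀ + p eᵢᵀ`, where `p = X z`. Every functional of the normal cone is stationary along this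
curve, so `(A p)ᵢ = 0` on the cone and hence on its span; if the span is all symmetric matrices,
testing on `eᵢ pᵀ + p eᵢᵀ` itself gives `p = 0`. For `z = X i j • eᵢ - eⱼ` this says
`X k j = X k i * X i j`, so `X = x xᵀ` with `x` the first column. Conversely, at `X = x xᵀ` the
normal cone contains each `Eᵢᵢ` (the diagonal is constant on the elliptope) and `-y yᵀ` for every
`y ⊥ x`, and these span the symmetric matrices. -/

theorem eq_zero_of_forall_mul_le_mul_sq {b K : ℝ} (h : ∀ t, b * t ≤ K * t ^ 2) : b = 0 := by
  have hK : 0 < |K| + 1 := by positivity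
  obtain ⟨t, rfl⟩ : ∃ t, b = t * (|K| + 1) := ⟨b / (|K| + 1), by field_simp⟩
  have ht := h t
  have hK_le : K * t ^ 2 ≤ |K| * t ^ 2 :=
    mul_le_mul_of_nonneg_right (le_abs_self K) (sq_nonneg t)
  have ht2 : t ^ 2 ≤ 0 := by nlinarith
  rw [pow_eq_zero_iff two_ne_zero |>.mp (le_antisymm ht2 (sq_nonneg t)), zero_mul]

theorem eq_zero_of_forall_ellipse {κ a b : ℝ} (hκ : 0 ≤ κ)
    (h : ∀ c s, c ^ 2 + κ * s ^ 2 = 1 → (c - 1) * a + s * b ≤ 0) : b = 0 := by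
  refine eq_zero_of_forall_mul_le_mul_sq (K := κ * a) fun t => ?_
  have hd : 0 < 1 + κ * t ^ 2 := by positivity
  have key : ((1 - κ * t ^ 2) / (1 + κ * t ^ 2) - 1) * a + 2 * t / (1 + κ * t ^ 2) * b =
      2 * (b * t - κ * a * t ^ 2) / (1 + κ * t ^ 2) := by
    field_simp; ring
  have hle := h ((1 - κ * t ^ 2) / (1 + κ * t ^ 2)) (2 * t / (1 + κ * t ^ 2)) (by field_simp; ring)
  rw [key, div_le_iff₀ hd] at hle
  linarith

namespace Matrix

variable {R ι : Type*} [CommRing R]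

theorem trace_mul_vecMulVec [Fintype ι] (A : Matrix ι ι R) (u v : ι → R) :
    (A * vecMulVec u v).trace = (A *ᵥ u) ⬝ᵥ v := by
  rw [mul_vecMulVec, trace_vecMulVec]

theorem IsSymm.mulVec_dotProduct_comm [Fintype ι] {A : Matrix ι ι R} (hA : A.IsSymm)
    (u v : ι → R) : (A *ᵥ u) ⬝ᵥ v = (A *ᵥ v) ⬝ᵥ u := by
  rw [dotProduct_comm, dotProduct_mulVec, ← mulVec_transpose, hA.eq]

theorem one_add_vecMulVec_mul_mul_transpose [Fintype ι] [DecidableEq ι] {X : Matrix ι ι R}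
    (hX : X.IsSymm) (e q : ι → R) :
    (1 + vecMulVec e q) * X * (1 + vecMulVec e q)ᵀ =
      X + vecMulVec e (X *ᵥ q) + vecMulVec (X *ᵥ q) e + (q ⬝ᵥ X *ᵥ q) • vecMulVec e e := by
  have hqX : q ᵥ* X = X *ᵥ q := by rw [← mulVec_transpose, hX.eq]
  have expand : ∀ E F : Matrix ι ι R, (1 + E) * X * (1 + F) = X + E * X + X * F + E * X * F :=
    fun E F => by noncomm_ring
  rw [transpose_add, transpose_one, transpose_vecMulVec, expand, vecMulVec_mul, mul_vecMulVec,
    vecMulVec_mul, vecMul_vecMulVec, hqX, dotProduct_comm, vecMulVec_smul]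

theorem single_add_single_eq_smul [DecidableEq ι] {x : ι → R} {i j : ι}
    (hi : x i * x i = 1) (hj : x j * x j = 1) :
    single i j (1 : R) + single j i 1 = (x i * x j) • (single i i 1 + single j j 1 -
      vecMulVec (x j • Pi.single i 1 - x i • Pi.single j 1)
        (x j • Pi.single i 1 - x i • Pi.single j 1)) := by
  simp only [sub_vecMulVec, vecMulVec_sub, smul_vecMulVec, vecMulVec_smul,
    ← single_eq_single_vecMulVec_single]
  linear_combination (norm := module) (x i * x j) • hj • single i i (1 : R) +
    (x i * x j) • hi • single j j (1 : R) - hi • (single i j (1 : R) + single j i 1) -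
    (x i * x i) • hj • (single i j (1 : R) + single j i 1)

end Matrix

variable {n : ℕ}

theorem symmetricSubmodule_le_span {S : Submodule ℝ (Matrix (Fin n) (Fin n) ℝ)}
    (h : ∀ i j, single i j (1 : ℝ) + single j i 1 ∈ S) : symmetricSubmodule n ≤ S := by
  intro A hA
  have hsum : ∑ i, ∑ j, A i j • (single i j (1 : ℝ) + single j i 1) = (2 : ℝ) • A := by
    simp only [smul_add, Finset.sum_add_distrib, smul_single, smul_eq_mul, mul_one]
    rw [Finset.sum_comm (f := fun i j => single j i (A i j)), two_smul, ← matrix_eq_sum_single]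
    congr 1
    conv_rhs => rw [matrix_eq_sum_single A]
    exact Finset.sum_congr rfl fun j _ => Finset.sum_congr rfl fun i _ => by rw [hA.apply]
  have h2A : A = (2 : ℝ)⁻¹ • ∑ i, ∑ j, A i j • (single i j (1 : ℝ) + single j i 1) := by
    rw [hsum, smul_smul, inv_mul_cancel₀ two_ne_zero, one_smul]
  rw [h2A]
  exact S.smul_mem _ (S.sum_mem fun i _ => S.sum_mem fun j _ => S.smul_mem _ (h i j))

theorem isSymm_of_mem_elliptope {X : Matrix (Fin n) (Fin n) ℝ} (hX : X ∈ elliptope n) :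
    X.IsSymm :=
  isHermitian_iff_isSymm.mp hX.1.isHermitian

theorem span_elliptopeNormalCone_le (X : Matrix (Fin n) (Fin n) ℝ) :
    Submodule.span ℝ (elliptopeNormalCone n X) ≤ symmetricSubmodule n :=
  Submodule.span_le.mpr fun _ hA => hA.1

theorem single_mem_elliptopeNormalCone {X : Matrix (Fin n) (Fin n) ℝ} (hX : X ∈ elliptope n)
    (i : Fin n) : single i i (1 : ℝ) ∈ elliptopeNormalCone n X :=
  ⟨by simp [IsSymm, transpose_single], fun Y hY => by simp [trace_single_mul, hY.2, hX.2]⟩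

theorem neg_vecMulVec_mem_elliptopeNormalCone {X : Matrix (Fin n) (Fin n) ℝ} {y : Fin n → ℝ}
    (hy : y ⬝ᵥ X *ᵥ y = 0) : -vecMulVec y y ∈ elliptopeNormalCone n X := by
  refine ⟨IsSymm.neg (transpose_vecMulVec y y), fun Y hY => ?_⟩
  have hYy := hY.1.dotProduct_mulVec_nonneg y
  simp only [star_trivial] at hYy
  rw [neg_mul, neg_mul, trace_neg, trace_neg, trace_mul_comm, trace_mul_comm _ X,
    trace_mul_vecMulVec, trace_mul_vecMulVec, dotProduct_comm (Y *ᵥ y), dotProduct_comm (X *ᵥ y),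
    hy]
  linarith

theorem span_elliptopeNormalCone_vecMulVec_eq {x : Fin n → ℝ} (hX : vecMulVec x x ∈ elliptope n) :
    Submodule.span ℝ (elliptopeNormalCone n (vecMulVec x x)) = symmetricSubmodule n := by
  refine le_antisymm (span_elliptopeNormalCone_le _) (symmetricSubmodule_le_span fun i j => ?_)
  set y : Fin n → ℝ := x j • Pi.single i 1 - x i • Pi.single j 1
  have hy : y ⬝ᵥ vecMulVec x x *ᵥ y = 0 := by
    have hxy : x ⬝ᵥ y = 0 := by simp [y, dotProduct_sub, mul_comm]
    simp [vecMulVec_mulVec, hxy]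
  rw [single_add_single_eq_smul (hX.2 i) (hX.2 j)]
  refine Submodule.smul_mem _ _ (sub_mem (add_mem ?_ ?_) ?_)
  · exact Submodule.subset_span (single_mem_elliptopeNormalCone hX i)
  · exact Submodule.subset_span (single_mem_elliptopeNormalCone hX j)
  · simpa using neg_mem (Submodule.subset_span (neg_vecMulVec_mem_elliptopeNormalCone hy))

theorem mulVec_mulVec_apply_eq_zero_of_mem_elliptopeNormalCone {X A : Matrix (Fin n) (Fin n) ℝ}
    (hX : X ∈ elliptope n) (hA : A ∈ elliptopeNormalCone n X) {i : Fin n} {z : Fin n → ℝ}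
    (hz : (X *ᵥ z) i = 0) : (A *ᵥ (X *ᵥ z)) i = 0 := by
  have hXs := isSymm_of_mem_elliptope hX
  set e : Fin n → ℝ := Pi.single i 1
  have hXe : (X *ᵥ e) i = 1 := by simp [e, hX.2]
  have hzXe : (X *ᵥ e) ⬝ᵥ z = 0 := by rw [hXs.mulVec_dotProduct_comm]; simpa [e] using hz
  refine eq_zero_of_forall_ellipse (by simpa using hX.1.dotProduct_mulVec_nonneg z)
    (a := (A *ᵥ (X *ᵥ e)) i - A i i) fun c s hcs => ?_
  -- `(1 + e qᵀ) X (1 + e qᵀ)ᵀ` replaces the `i`-th Gram vector `vᵢ` of `X` by `c vᵢ + s V z`,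
  -- which is again a unit vector.
  set q := (c - 1) • e + s • z
  have hXq : X *ᵥ q = (c - 1) • (X *ᵥ e) + s • (X *ᵥ z) := by
    simp only [q, mulVec_add, mulVec_smul]
  have hXq_i : (X *ᵥ q) i = c - 1 := by simp [hXq, hz, hXe]
  have hqXq : q ⬝ᵥ X *ᵥ q = 2 - 2 * c := by
    simp only [hXq, q, add_dotProduct, dotProduct_add, smul_dotProduct, dotProduct_smul,
      smul_eq_mul, e, single_dotProduct, one_mul, hz, hXe, dotProduct_comm z (X *ᵥ e), hzXe]
    linear_combination hcs
  have hY : (1 + vecMulVec e q) * X * (1 + vecMulVec e q)ᵀ ∈ elliptope n := by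
    have hpsd := hX.1.mul_mul_conjTranspose_same (1 + vecMulVec e q)
    refine ⟨by rwa [conjTranspose_eq_transpose_of_trivial] at hpsd, fun k => ?_⟩
    rw [one_add_vecMulVec_mul_mul_transpose hXs]
    simp only [Matrix.add_apply, Matrix.smul_apply, vecMulVec_apply, smul_eq_mul, hX.2]
    rcases eq_or_ne k i with rfl | hk
    · simp only [e, Pi.single_eq_same, hXq_i, hqXq]; ring
    · simp [e, Pi.single_eq_of_ne hk]
  have hAe : (A *ᵥ e) i = A i i := by simp [e]
  have hdot_e : ∀ v, v ⬝ᵥ e = v i := fun v => by simp [e]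
  have hle := hA.2 _ hY
  rw [one_add_vecMulVec_mul_mul_transpose hXs] at hle
  simp only [mul_add, trace_add, Matrix.mul_smul, trace_smul, trace_mul_vecMulVec] at hle
  rw [hA.1.mulVec_dotProduct_comm e, hqXq, hXq] at hle
  simp only [hdot_e, hAe, mulVec_add, mulVec_smul, Pi.add_apply, Pi.smul_apply,
    smul_eq_mul] at hle
  linarith

theorem mulVec_eq_zero_of_span_elliptopeNormalCone_eq {X : Matrix (Fin n) (Fin n) ℝ}
    (hX : X ∈ elliptope n)
    (hspan : Submodule.span ℝ (elliptopeNormalCone n X) = symmetricSubmodule n)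
    {i : Fin n} {z : Fin n → ℝ} (hz : (X *ᵥ z) i = 0) : X *ᵥ z = 0 := by
  set p := X *ᵥ z
  have hker : ∀ A ∈ Submodule.span ℝ (elliptopeNormalCone n X), (A *ᵥ p) i = 0 := by
    intro A hA
    induction hA using Submodule.span_induction with
    | mem A hA => exact mulVec_mulVec_apply_eq_zero_of_mem_elliptopeNormalCone hX hA hz
    | zero => simp
    | add A B _ _ hA hB => simp [add_mulVec, hA, hB]
    | smul c A _ hA => simp [smul_mulVec, hA]
  have hB : vecMulVec (Pi.single i 1) p + vecMulVec p (Pi.single i 1) ∈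
      Submodule.span ℝ (elliptopeNormalCone n X) := by
    have hsymm : (vecMulVec (Pi.single i 1) p + vecMulVec p (Pi.single i 1)).IsSymm := by
      simpa using isSymm_add_transpose_self (vecMulVec (Pi.single i 1) p)
    rw [hspan]
    exact hsymm
  simpa [add_mulVec, vecMulVec_mulVec, hz] using hker _ hB

theorem exists_eq_vecMulVec_of_apply_eq_mul {X : Matrix (Fin n) (Fin n) ℝ} (hXs : X.IsSymm)
    (hd : ∀ i, X i i = 1) (hmul : ∀ i j k, X k j = X k i * X i j) :
    ∃ x : Fin n → ℝ, (∀ i, x i = 1 ∨ x i = -1) ∧ X = vecMulVec x x := by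
  cases n with
  | zero => exact ⟨0, fun i => i.elim0, Subsingleton.elim _ _⟩
  | succ m =>
    refine ⟨fun k => X k 0, fun k => mul_self_eq_one_iff.mp ?_, ?_⟩
    · rw [← hd k, hmul 0 k k, hXs.apply k 0]
    · ext k j
      rw [vecMulVec_apply, hmul 0 j k, hXs.apply j 0]

/-- A point of the elliptope is a vertex (its normal cone is full-dimensional in
the space of symmetric matrices) if and only if it is `x xᵀ` for a `±1` vector `x`. -/
theorem elliptope_vertex_iff (n : ℕ) (X : Matrix (Fin n) (Fin n) ℝ)
    (hX : X ∈ elliptope n) :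
    Submodule.span ℝ (elliptopeNormalCone n X) = symmetricSubmodule n ↔
      ∃ x : Fin n → ℝ, (∀ i, x i = 1 ∨ x i = -1) ∧ X = Matrix.vecMulVec x x := by
  constructor
  · intro hspan
    refine exists_eq_vecMulVec_of_apply_eq_mul (isSymm_of_mem_elliptope hX) hX.2 fun i j k => ?_
    set z : Fin n → ℝ := X i j • Pi.single i 1 - Pi.single j 1
    have hXz : ∀ l, (X *ᵥ z) l = X l i * X i j - X l j := fun l => by
      simp [z, mulVec_sub, mulVec_smul, mul_comm]
    have hz : (X *ᵥ z) i = 0 := by rw [hXz, hX.2, one_mul, sub_self]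
    have hXz_k := congrFun (mulVec_eq_zero_of_span_elliptopeNormalCone_eq hX hspan hz) k
    rw [hXz, Pi.zero_apply, sub_eq_zero] at hXz_k
    exact hXz_k.symm
  · rintro ⟨x, -, rfl⟩
    exact span_elliptopeNormalCone_vecMulVec_eq hX
end

section
/- Let G and H be vertex-disjoint graphs with n_G ≥ 1 and n_H ≥ 1 vertices, with positive edge weights w_G, w_H and weighted Laplacians L_G, L_H. Set μ_G = λ_max(L_G), μ_H = λ_max(L_H), and α = μ_G/n_H. Assume n_G μ_G > n_H μ_H and H is connected. Let 4C be the weighted Laplacian of the cosum G ∨ H with weights w_G on E(G), w_H on E(H), and α on all edges between V(G) and V(H). Then X* = (−𝟙_G ⊕ 𝟙_H)(−𝟙_G ⊕ 𝟙_H)ᵀ is the unique optimal solution of the MaxCut SDP max{Tr(CX) : diag(X)=𝟙, X⪰0}, and the dual matrix S* = [[μ_G I − L_G, α 𝟙_G 𝟙_Hᵀ],[α 𝟙_H 𝟙_Gᵀ, α n_G I − L_H]] together with y* = 2α(n_H 𝟙_G ⊕ n_G 𝟙_H) is the unique optimal dual solution; moreover (X* + S*)(h ⊕ 0) = 0 for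 any μ_G-eigenvector h of L_G, so strict complementarity fails. -/
open Matrix

/-- The weighted Laplacian matrix of a symmetric weight function `w`
(supported on the edges of a graph). -/
def lapMatrix {V : Type*} [Fintype V] [DecidableEq V] (w : V → V → ℝ) :
    Matrix V V ℝ :=
  Matrix.diagonal (fun i => ∑ j, w i j) - Matrix.of w

/-!
Write `e = -𝟙_G ⊕ 𝟙_H`, so `X* = e eᵀ`, and `S* = Diag y* - 4C`. After centring both blocks,
the quadratic form of `S*` splits as the forms of `μG I - L_G` and `α nG I - L_H` on the centred
parts plus `α nG nH (mean_G + mean_H)²`; hence `S* ⪰ 0` and `S* e = 0`, and complementary slackness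
makes `X*` and `y*` optimal. Since `μH < α nG`, the `H`-block is positive definite, so every
column of an optimal `X` (which satisfies `S* X = 0`) is constant on `V(H)` with opposite means on
the two sides. This gives `eᵀ X e = n²`, which for a correlation matrix forces `X = e eᵀ`. Testing
a dual feasible `Diag y - 4C` against `e` gives dual optimality and uniqueness. Finally, a
`μG`-eigenvector `h` of `L_G` is orthogonal to `𝟙`, so `h ⊕ 0` lies in the kernels of both `X*`
and `S*`, and no optimal pair is strictly complementary.
-/

namespace Matrix

section PosSemidef

open scoped ComplexOrder

variable {n 𝕜 : Type*} [Fintype n] [RCLike 𝕜] {S Y : Matrix n n 𝕜}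

open scoped MatrixOrder in
lemma PosSemidef.exists_eq_conjTranspose_mul_self (hS : S.PosSemidef) :
    ∃ B : Matrix n n 𝕜, S = Bᴴ * B := by
  classical
  exact CStarAlgebra.nonneg_iff_eq_star_mul_self.mp hS.nonneg

lemma trace_conjTranspose_mul_self_mul_conjTranspose_mul_self (A B : Matrix n n 𝕜) :
    (Aᴴ * A * (Bᴴ * B)).trace = ((A * Bᴴ)ᴴ * (A * Bᴴ)).trace := by
  rw [conjTranspose_mul, conjTranspose_conjTranspose, ← Matrix.mul_assoc (Aᴴ * A),
    trace_mul_comm]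
  simp only [Matrix.mul_assoc]

lemma PosSemidef.trace_mul_nonneg (hS : S.PosSemidef) (hY : Y.PosSemidef) :
    0 ≤ (S * Y).trace := by
  obtain ⟨A, rfl⟩ := hS.exists_eq_conjTranspose_mul_self
  obtain ⟨B, rfl⟩ := hY.exists_eq_conjTranspose_mul_self
  rw [trace_conjTranspose_mul_self_mul_conjTranspose_mul_self]
  exact (posSemidef_conjTranspose_mul_self _).trace_nonneg

lemma PosSemidef.mul_eq_zero_of_trace_mul_eq_zero (hS : S.PosSemidef) (hY : Y.PosSemidef)
    (h : (S * Y).trace = 0) : S * Y = 0 := by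
  obtain ⟨A, rfl⟩ := hS.exists_eq_conjTranspose_mul_self
  obtain ⟨B, rfl⟩ := hY.exists_eq_conjTranspose_mul_self
  rw [trace_conjTranspose_mul_self_mul_conjTranspose_mul_self,
    trace_conjTranspose_mul_self_eq_zero_iff] at h
  rw [Matrix.mul_assoc, ← Matrix.mul_assoc A, h, Matrix.zero_mul, Matrix.mul_zero]

end PosSemidef

section Real

variable {n : Type*}

lemma posDef_smul_one_sub_of_lt [DecidableEq n] {L : Matrix n n ℝ} {μ d : ℝ}
    (h : (μ • 1 - L).PosSemidef) (hμd : μ < d) : (d • 1 - L).PosDef := by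
  have : d • 1 - L = (d - μ) • (1 : Matrix n n ℝ) + (μ • 1 - L) := by
    rw [sub_smul]
    abel
  rw [this]
  exact (PosDef.one.smul (sub_pos.mpr hμd)).add_posSemidef h

lemma PosSemidef.isSymm {X : Matrix n n ℝ} (hX : X.PosSemidef) : X.IsSymm :=
  isHermitian_iff_isSymm.mp hX.isHermitian

variable [Fintype n]

lemma posSemidef_vecMulVec_self (e : n → ℝ) : (vecMulVec e e).PosSemidef := by
  simpa using posSemidef_vecMulVec_self_star e

lemma trace_mul_vecMulVec_self (C : Matrix n n ℝ) (e : n → ℝ) :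
    (C * vecMulVec e e).trace = e ⬝ᵥ C *ᵥ e := by
  rw [mul_vecMulVec, trace_vecMulVec, dotProduct_comm]

lemma one_dotProduct_mulVec_of_isSymm {N : Matrix n n ℝ} (hN : N.IsSymm) {d : ℝ}
    (hN1 : N *ᵥ (fun _ => 1) = d • fun _ => 1) (u : n → ℝ) :
    (fun _ => 1) ⬝ᵥ N *ᵥ u = d * ∑ i, u i := by
  rw [dotProduct_mulVec, ← mulVec_transpose, hN.eq, hN1]
  simp [dotProduct, Finset.mul_sum]

lemma sum_eq_zero_of_mulVec_eq_zero {N : Matrix n n ℝ} (hN : N.IsSymm) {d : ℝ}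
    (hN1 : N *ᵥ (fun _ => 1) = d • fun _ => 1) (hd : d ≠ 0) {h : n → ℝ} (hh : N *ᵥ h = 0) :
    ∑ i, h i = 0 := by
  have := one_dotProduct_mulVec_of_isSymm hN hN1 h
  rw [hh, dotProduct_zero, eq_comm, mul_eq_zero] at this
  exact this.resolve_left hd

lemma dotProduct_add_const_mulVec {N : Matrix n n ℝ} (hN : N.IsSymm) {d : ℝ}
    (hN1 : N *ᵥ (fun _ => 1) = d • fun _ => 1) {u : n → ℝ} (hu : ∑ i, u i = 0) (c : ℝ) :
    (u + c • fun _ => 1) ⬝ᵥ N *ᵥ (u + c • fun _ => 1) =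
      u ⬝ᵥ N *ᵥ u + d * Fintype.card n * c ^ 2 := by
  have h1 := one_dotProduct_mulVec_of_isSymm hN hN1
  simp only [mulVec_add, mulVec_smul, dotProduct_add, add_dotProduct, dotProduct_smul,
    smul_dotProduct, h1, hu, hN1]
  simp [dotProduct, hu]
  ring

variable [DecidableEq n]

lemma smul_one_sub_mulVec_eq_zero {L : Matrix n n ℝ} {μ : ℝ} {h : n → ℝ}
    (hh : L *ᵥ h = μ • h) : (μ • 1 - L) *ᵥ h = 0 := by
  rw [sub_mulVec, smul_mulVec, one_mulVec, hh, sub_self]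

lemma nonneg_of_posSemidef_smul_one_sub [Nonempty n] {L : Matrix n n ℝ} {d : ℝ}
    (hL1 : L *ᵥ (fun _ => 1) = 0) (h : (d • 1 - L).PosSemidef) : 0 ≤ d := by
  have := h.dotProduct_mulVec_nonneg fun _ => 1
  simp only [star_trivial, sub_mulVec, hL1, smul_mulVec, one_mulVec, sub_zero] at this
  simp only [dotProduct, Pi.smul_apply, smul_eq_mul, mul_one, Finset.sum_const,
    Finset.card_univ, nsmul_eq_mul] at this
  have hcard : (0 : ℝ) < Fintype.card n := by exact_mod_cast Fintype.card_pos
  nlinarith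

lemma PosSemidef.two_mul_mul_apply_le {X : Matrix n n ℝ} (hX : X.PosSemidef) (i j : n)
    (a b : ℝ) : 2 * (a * b * X i j) ≤ a ^ 2 * X i i + b ^ 2 * X j j := by
  have h := hX.dotProduct_mulVec_nonneg (Pi.single i a - Pi.single j b)
  have hsymm : X j i = X i j := hX.isSymm.apply i j
  simp only [star_trivial, mulVec_sub, sub_dotProduct, dotProduct_sub, mulVec_single,
    single_dotProduct] at h
  simp only [Pi.smul_apply, col_apply, MulOpposite.smul_eq_mul_unop, MulOpposite.unop_op,
    hsymm] at h
  linarith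

lemma eq_vecMulVec_of_card_sq_le_dotProduct_mulVec {X : Matrix n n ℝ} (hX : X.PosSemidef)
    (hdiag : ∀ i, X i i = 1) {e : n → ℝ} (he : ∀ i, e i ^ 2 = 1)
    (h : (Fintype.card n : ℝ) ^ 2 ≤ e ⬝ᵥ X *ᵥ e) : X = vecMulVec e e := by
  have hle : ∀ i j, e i * X i j * e j ≤ 1 := fun i j => by
    have := hX.two_mul_mul_apply_le i j (e i) (e j)
    rw [hdiag, hdiag, he, he] at this
    linarith
  have hsum : ∑ i, ∑ j, e i * X i j * e j = ∑ _ : n, ∑ _ : n, (1 : ℝ) := by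
    refine le_antisymm (Finset.sum_le_sum fun i _ => Finset.sum_le_sum fun j _ => hle i j) ?_
    simpa [dotProduct, mulVec, Finset.mul_sum, mul_assoc, sq] using h
  have heq : ∀ i j, e i * X i j * e j = 1 := fun i j => by
    have hrow := (Finset.sum_eq_sum_iff_of_le fun i _ => Finset.sum_le_sum fun j _ => hle i j).mp
      hsum i (Finset.mem_univ _)
    exact (Finset.sum_eq_sum_iff_of_le fun j _ => hle i j).mp hrow j (Finset.mem_univ _)
  ext i j
  calc X i j = e i ^ 2 * e j ^ 2 * X i j := by rw [he, he, one_mul, one_mul]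
    _ = (e i * X i j * e j) * (e i * e j) := by ring
    _ = vecMulVec e e i j := by rw [heq, one_mul, vecMulVec_apply]

end Real

end Matrix

section MaxCut

variable {n : Type*} [Fintype n] [DecidableEq n] {C : Matrix n n ℝ} {e y y₀ : n → ℝ}

def IsMaxCutOptimal (C X : Matrix n n ℝ) : Prop :=
  X.PosSemidef ∧ (∀ i, X i i = 1) ∧
    ∀ Y : Matrix n n ℝ, Y.PosSemidef → (∀ i, Y i i = 1) → (C * Y).trace ≤ (C * X).trace

def IsMaxCutDualOptimal (C : Matrix n n ℝ) (y : n → ℝ) : Prop :=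
  (diagonal y - C).PosSemidef ∧
    ∀ y' : n → ℝ, (diagonal y' - C).PosSemidef → ∑ i, y i ≤ ∑ i, y' i

def IsStrictlyComplementary (C X : Matrix n n ℝ) (y : n → ℝ) : Prop :=
  IsMaxCutOptimal C X ∧ IsMaxCutDualOptimal C y ∧
    X * (diagonal y - C) = 0 ∧ (X + (diagonal y - C)).PosDef

lemma trace_diagonal_sub_mul_of_diag_eq_one {Y : Matrix n n ℝ} (hY : ∀ i, Y i i = 1) :
    ((diagonal y - C) * Y).trace = ∑ i, y i - (C * Y).trace := by
  rw [Matrix.sub_mul, trace_sub]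
  congr 1
  simp [trace, hY]

lemma trace_mul_le_sum_of_posSemidef {Y : Matrix n n ℝ} (hY : Y.PosSemidef)
    (hYdiag : ∀ i, Y i i = 1) (hy : (diagonal y - C).PosSemidef) : (C * Y).trace ≤ ∑ i, y i := by
  have := hy.trace_mul_nonneg hY
  rw [trace_diagonal_sub_mul_of_diag_eq_one hYdiag] at this
  linarith

lemma dotProduct_diagonal_sub_mulVec (he : ∀ i, e i ^ 2 = 1) :
    e ⬝ᵥ (diagonal y - C) *ᵥ e = ∑ i, y i - e ⬝ᵥ C *ᵥ e := by
  rw [sub_mulVec, dotProduct_sub]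
  congr 1
  refine Finset.sum_congr rfl fun i _ => ?_
  rw [mulVec_diagonal]
  linear_combination y i * he i

lemma sum_eq_dotProduct_mulVec_of_diagonal_sub_mulVec_eq_zero (he : ∀ i, e i ^ 2 = 1)
    (h₀ : (diagonal y₀ - C) *ᵥ e = 0) : ∑ i, y₀ i = e ⬝ᵥ C *ᵥ e := by
  have := dotProduct_diagonal_sub_mulVec (C := C) (y := y₀) he
  rw [h₀, dotProduct_zero] at this
  linarith

lemma sum_le_sum_of_posSemidef_diagonal_sub (he : ∀ i, e i ^ 2 = 1)
    (h₀ : (diagonal y₀ - C) *ᵥ e = 0) (hy : (diagonal y - C).PosSemidef) :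
    ∑ i, y₀ i ≤ ∑ i, y i := by
  have := hy.dotProduct_mulVec_nonneg e
  rw [star_trivial, dotProduct_diagonal_sub_mulVec he,
    ← sum_eq_dotProduct_mulVec_of_diagonal_sub_mulVec_eq_zero he h₀] at this
  linarith

lemma eq_of_posSemidef_diagonal_sub_of_sum_le (he : ∀ i, e i ^ 2 = 1)
    (h₀ : (diagonal y₀ - C) *ᵥ e = 0) (hy : (diagonal y - C).PosSemidef)
    (hle : ∑ i, y i ≤ ∑ i, y₀ i) : y = y₀ := by
  have hker : (diagonal y - C) *ᵥ e = 0 := by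
    rw [← hy.dotProduct_mulVec_zero_iff, star_trivial, dotProduct_diagonal_sub_mulVec he,
      ← sum_eq_dotProduct_mulVec_of_diagonal_sub_mulVec_eq_zero he h₀]
    linarith [sum_le_sum_of_posSemidef_diagonal_sub he h₀ hy]
  funext i
  have hi := congrFun hker i
  have hi₀ := congrFun h₀ i
  simp only [sub_mulVec, Pi.sub_apply, mulVec_diagonal, Pi.zero_apply] at hi hi₀
  have hei : e i ≠ 0 := fun h => by simpa [h] using he i
  exact mul_right_cancel₀ hei (by linarith)

lemma isMaxCutOptimal_vecMulVec (he : ∀ i, e i ^ 2 = 1) (h₀ : (diagonal y₀ - C) *ᵥ e = 0)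
    (hS₀ : (diagonal y₀ - C).PosSemidef) : IsMaxCutOptimal C (vecMulVec e e) := by
  refine ⟨posSemidef_vecMulVec_self e, fun i => by simp [vecMulVec_apply, ← sq, he], ?_⟩
  intro Y hY hYdiag
  rw [trace_mul_vecMulVec_self, ← sum_eq_dotProduct_mulVec_of_diagonal_sub_mulVec_eq_zero he h₀]
  exact trace_mul_le_sum_of_posSemidef hY hYdiag hS₀

lemma IsMaxCutOptimal.diagonal_sub_mul_eq_zero {X : Matrix n n ℝ} (hX : IsMaxCutOptimal C X)
    (he : ∀ i, e i ^ 2 = 1) (h₀ : (diagonal y₀ - C) *ᵥ e = 0)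
    (hS₀ : (diagonal y₀ - C).PosSemidef) : (diagonal y₀ - C) * X = 0 := by
  obtain ⟨hXpsd, hXdiag, hXopt⟩ := hX
  refine hS₀.mul_eq_zero_of_trace_mul_eq_zero hXpsd (le_antisymm ?_ (hS₀.trace_mul_nonneg hXpsd))
  have := hXopt _ (posSemidef_vecMulVec_self e) (isMaxCutOptimal_vecMulVec he h₀ hS₀).2.1
  rw [trace_diagonal_sub_mul_of_diag_eq_one hXdiag,
    sum_eq_dotProduct_mulVec_of_diagonal_sub_mulVec_eq_zero he h₀, ← trace_mul_vecMulVec_self]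
  linarith

lemma IsMaxCutDualOptimal.eq (hy : IsMaxCutDualOptimal C y) (he : ∀ i, e i ^ 2 = 1)
    (h₀ : (diagonal y₀ - C) *ᵥ e = 0) (hS₀ : (diagonal y₀ - C).PosSemidef) : y = y₀ :=
  eq_of_posSemidef_diagonal_sub_of_sum_le he h₀ hy.1 (hy.2 y₀ hS₀)

lemma not_exists_isStrictlyComplementary (he : ∀ i, e i ^ 2 = 1)
    (h₀ : (diagonal y₀ - C) *ᵥ e = 0) (hS₀ : (diagonal y₀ - C).PosSemidef)
    (huniq : ∀ X, IsMaxCutOptimal C X → X = vecMulVec e e) {z : n → ℝ} (hz : z ≠ 0)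
    (hez : e ⬝ᵥ z = 0) (hS₀z : (diagonal y₀ - C) *ᵥ z = 0) :
    ¬ ∃ X y, IsStrictlyComplementary C X y := by
  rintro ⟨X, y, hX, hy, -, hpos⟩
  rw [huniq X hX, hy.eq he h₀ hS₀] at hpos
  have := hpos.dotProduct_mulVec_pos hz
  rw [add_mulVec, hS₀z, vecMulVec_mulVec, hez] at this
  simp at this

end MaxCut

section Laplacian

variable {V : Type*} [Fintype V] [DecidableEq V]

lemma lapMatrix_mulVec_one (w : V → V → ℝ) : lapMatrix w *ᵥ (fun _ => 1) = 0 := by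
  funext i
  simp [lapMatrix, mulVec, dotProduct, diagonal_apply]

lemma smul_one_sub_lapMatrix_mulVec_one (d : ℝ) (w : V → V → ℝ) :
    (d • 1 - lapMatrix w) *ᵥ (fun _ => 1) = d • fun _ => 1 := by
  rw [sub_mulVec, lapMatrix_mulVec_one, sub_zero, smul_mulVec, one_mulVec]

end Laplacian

section Cosum

open scoped BigOperators

variable {l m : Type*}

def cutVector : l ⊕ m → ℝ := Sum.elim (fun _ => -1) (fun _ => 1)

lemma cutVector_sq (k : l ⊕ m) : cutVector k ^ 2 = 1 := by
  cases k <;> simp [cutVector]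

lemma cutVector_dotProduct_sumElim_zero [Fintype l] [Fintype m] (h : l → ℝ) :
    cutVector ⬝ᵥ Sum.elim h (fun _ : m => 0) = -∑ i, h i := by
  simp [cutVector, dotProduct, Fintype.sum_sum_type]

variable [Fintype l] [Fintype m]

/-- The dual slack matrix `S*`, with `A = μG I - L_G` and `B = α nG I - L_H` in the theorem. -/
def cosumSlack (A : Matrix l l ℝ) (B : Matrix m m ℝ) (α : ℝ) : Matrix (l ⊕ m) (l ⊕ m) ℝ :=
  fromBlocks A (α • vecMulVec (fun _ => 1) (fun _ => 1))
    (α • vecMulVec (fun _ => 1) (fun _ => 1)) B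

variable {A : Matrix l l ℝ} {B : Matrix m m ℝ} {α : ℝ}

lemma cosumSlack_mulVec (A : Matrix l l ℝ) (B : Matrix m m ℝ) (α : ℝ) (x : l ⊕ m → ℝ) :
    cosumSlack A B α *ᵥ x =
      Sum.elim (A *ᵥ (x ∘ Sum.inl) + (α * ∑ j, x (Sum.inr j)) • fun _ => 1)
        (B *ᵥ (x ∘ Sum.inr) + (α * ∑ i, x (Sum.inl i)) • fun _ => 1) := by
  rw [cosumSlack, fromBlocks_mulVec]
  congr 1 <;> ext <;> simp [mulVec, dotProduct, vecMulVec_apply, Finset.mul_sum, add_comm]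

lemma dotProduct_cosumSlack_mulVec (x : l ⊕ m → ℝ) :
    x ⬝ᵥ cosumSlack A B α *ᵥ x =
      (x ∘ Sum.inl) ⬝ᵥ A *ᵥ (x ∘ Sum.inl) + (x ∘ Sum.inr) ⬝ᵥ B *ᵥ (x ∘ Sum.inr)
        + 2 * α * (∑ i, x (Sum.inl i)) * ∑ j, x (Sum.inr j) := by
  rw [cosumSlack_mulVec]
  simp only [dotProduct, Fintype.sum_sum_type, Sum.elim_inl, Sum.elim_inr, Pi.add_apply,
    Pi.smul_apply, Function.comp_apply, mul_add, Finset.sum_add_distrib, smul_eq_mul, mul_one,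
    ← Finset.sum_mul]
  ring

lemma dotProduct_cosumSlack_mulVec_centered (hA : A.IsSymm)
    (hA1 : A *ᵥ (fun _ => 1) = (α * Fintype.card m) • fun _ => 1) (hB : B.IsSymm)
    (hB1 : B *ᵥ (fun _ => 1) = (α * Fintype.card l) • fun _ => 1) (x : l ⊕ m → ℝ) :
    x ⬝ᵥ cosumSlack A B α *ᵥ x =
      (x ∘ Sum.inl - (𝔼 i, x (Sum.inl i)) • fun _ => 1) ⬝ᵥ
          A *ᵥ (x ∘ Sum.inl - (𝔼 i, x (Sum.inl i)) • fun _ => 1)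
        + (x ∘ Sum.inr - (𝔼 j, x (Sum.inr j)) • fun _ => 1) ⬝ᵥ
          B *ᵥ (x ∘ Sum.inr - (𝔼 j, x (Sum.inr j)) • fun _ => 1)
        + α * Fintype.card l * Fintype.card m * (𝔼 i, x (Sum.inl i) + 𝔼 j, x (Sum.inr j)) ^ 2 := by
  set cG := 𝔼 i, x (Sum.inl i) with hcG
  set cH := 𝔼 j, x (Sum.inr j) with hcH
  set u : l → ℝ := x ∘ Sum.inl - cG • fun _ => 1 with hu
  set v : m → ℝ := x ∘ Sum.inr - cH • fun _ => 1 with hv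
  have hG := dotProduct_add_const_mulVec hA hA1 (u := u)
    (by simp [hu, Finset.sum_sub_distrib, hcG]) cG
  have hH := dotProduct_add_const_mulVec hB hB1 (u := v)
    (by simp [hv, Finset.sum_sub_distrib, hcH]) cH
  rw [hu, sub_add_cancel] at hG
  rw [hv, sub_add_cancel] at hH
  rw [dotProduct_cosumSlack_mulVec, hG, hH, ← Fintype.card_mul_expect, ← Fintype.card_mul_expect]
  ring

lemma cosumSlack_mulVec_cutVector
    (hA1 : A *ᵥ (fun _ => 1) = (α * Fintype.card m) • fun _ => 1)
    (hB1 : B *ᵥ (fun _ => 1) = (α * Fintype.card l) • fun _ => 1) :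
    cosumSlack A B α *ᵥ cutVector = 0 := by
  have hG : (cutVector : l ⊕ m → ℝ) ∘ Sum.inl = -fun _ => 1 := rfl
  have hH : (cutVector : l ⊕ m → ℝ) ∘ Sum.inr = fun _ => 1 := rfl
  rw [cosumSlack_mulVec, hG, hH, mulVec_neg, hA1, hB1]
  ext k
  cases k <;> simp [cutVector]

lemma cosumSlack_mulVec_sumElim_zero {h : l → ℝ} (hh : A *ᵥ h = 0) (hsum : ∑ i, h i = 0) :
    cosumSlack A B α *ᵥ Sum.elim h (fun _ => 0) = 0 := by
  rw [cosumSlack_mulVec]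
  ext k
  cases k <;> simp [hh, hsum, Function.comp_def, ← Pi.zero_def]

lemma vecMulVec_cutVector_add_cosumSlack_mulVec_sumElim_zero {h : l → ℝ} (hh : A *ᵥ h = 0)
    (hsum : ∑ i, h i = 0) :
    (vecMulVec cutVector cutVector + cosumSlack A B α) *ᵥ Sum.elim h (fun _ => 0) = 0 := by
  rw [add_mulVec, vecMulVec_mulVec, cutVector_dotProduct_sumElim_zero, hsum,
    cosumSlack_mulVec_sumElim_zero hh hsum]
  simp

lemma cosumSlack_posSemidef (hA : A.PosSemidef)
    (hA1 : A *ᵥ (fun _ => 1) = (α * Fintype.card m) • fun _ => 1) (hB : B.PosSemidef)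
    (hB1 : B *ᵥ (fun _ => 1) = (α * Fintype.card l) • fun _ => 1) (hα : 0 ≤ α) :
    (cosumSlack A B α).PosSemidef := by
  refine .of_dotProduct_mulVec_nonneg
    (hA.isHermitian.fromBlocks (by ext; simp [vecMulVec_apply]) hB.isHermitian) fun x => ?_
  rw [star_trivial, dotProduct_cosumSlack_mulVec_centered hA.isSymm hA1 hB.isSymm hB1]
  have := hA.dotProduct_mulVec_nonneg (x ∘ Sum.inl - (𝔼 i, x (Sum.inl i)) • fun _ => 1)
  have := hB.dotProduct_mulVec_nonneg (x ∘ Sum.inr - (𝔼 j, x (Sum.inr j)) • fun _ => 1)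
  simp only [star_trivial] at *
  positivity

/-- A kernel vector of `S*` is constant on the `H`-side, and its means on the two sides cancel. -/
lemma cutVector_dotProduct_of_cosumSlack_mulVec_eq_zero (hA : A.PosSemidef)
    (hA1 : A *ᵥ (fun _ => 1) = (α * Fintype.card m) • fun _ => 1) (hB : B.PosDef)
    (hB1 : B *ᵥ (fun _ => 1) = (α * Fintype.card l) • fun _ => 1) (hα : 0 < α)
    {x : l ⊕ m → ℝ} (hx : cosumSlack A B α *ᵥ x = 0) (j : m) :
    cutVector ⬝ᵥ x = (Fintype.card l + Fintype.card m) * x (Sum.inr j) := by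
  have hq : x ⬝ᵥ cosumSlack A B α *ᵥ x = 0 := by rw [hx, dotProduct_zero]
  rw [dotProduct_cosumSlack_mulVec_centered hA.isSymm hA1 hB.posSemidef.isSymm hB1] at hq
  set cG := 𝔼 i, x (Sum.inl i) with hcG
  set cH := 𝔼 j, x (Sum.inr j) with hcH
  set v : m → ℝ := x ∘ Sum.inr - cH • fun _ => 1 with hv
  have hGnonneg := hA.dotProduct_mulVec_nonneg (x ∘ Sum.inl - cG • fun _ => 1)
  have hHnonneg := hB.posSemidef.dotProduct_mulVec_nonneg v
  simp only [star_trivial] at hGnonneg hHnonneg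
  have hmean : 0 ≤ α * Fintype.card l * Fintype.card m * (cG + cH) ^ 2 := by positivity
  have hv0 : v = 0 := by
    by_contra hne
    have := hB.dotProduct_mulVec_pos hne
    rw [star_trivial] at this
    linarith
  have hxj : x (Sum.inr j) = cH := by
    simpa [hv, sub_eq_zero] using congrFun hv0 j
  have hαm : α * Fintype.card m ≠ 0 :=
    (mul_pos hα (by simpa using Fintype.card_pos_iff.mpr ⟨j⟩)).ne'
  have hGH : (Fintype.card l : ℝ) * (cG + cH) = 0 := by
    have hc : α * Fintype.card l * Fintype.card m * (cG + cH) ^ 2 = 0 := by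
      rw [hv0] at hq
      simp only [zero_dotProduct] at hq
      linarith
    have : (α * Fintype.card m) * (Fintype.card l * (cG + cH) ^ 2) = 0 := by
      linear_combination hc
    rcases mul_eq_zero.mp ((mul_eq_zero.mp this).resolve_left hαm) with h | h
    · rw [h, zero_mul]
    · rw [pow_eq_zero_iff two_ne_zero] at h
      rw [h, mul_zero]
  have hsumG := Fintype.card_mul_expect fun i => x (Sum.inl i)
  have hsumH := Fintype.card_mul_expect fun j => x (Sum.inr j)
  simp only [cutVector, dotProduct, Fintype.sum_sum_type, Sum.elim_inl, Sum.elim_inr, neg_one_mul,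
    one_mul, Finset.sum_neg_distrib, ← hsumG, ← hsumH, ← hcG, ← hcH, hxj]
  linear_combination -hGH

variable [DecidableEq l] [DecidableEq m]

lemma diagonal_sub_lapMatrix_cosum (wG : l → l → ℝ) (wH : m → m → ℝ) (α : ℝ) :
    diagonal (Sum.elim (fun _ => 2 * α * Fintype.card m) (fun _ => 2 * α * Fintype.card l)) -
        lapMatrix (fun u v => Sum.elim (fun i => Sum.elim (fun j => wG i j) (fun _ => α) v)
          (fun i => Sum.elim (fun _ => α) (fun j => wH i j) v) u) =
      cosumSlack ((α * Fintype.card m) • 1 - lapMatrix wG)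
        ((α * Fintype.card l) • 1 - lapMatrix wH) α := by
  ext (i | i) (j | j) <;>
    simp [lapMatrix, cosumSlack, diagonal_apply, one_apply, vecMulVec_apply,
      Fintype.sum_sum_type] <;>
    split_ifs <;> ring

lemma eq_vecMulVec_cutVector_of_cosumSlack_mul_eq_zero [Nonempty m] (hA : A.PosSemidef)
    (hA1 : A *ᵥ (fun _ => 1) = (α * Fintype.card m) • fun _ => 1) (hB : B.PosDef)
    (hB1 : B *ᵥ (fun _ => 1) = (α * Fintype.card l) • fun _ => 1) (hα : 0 < α)
    {X : Matrix (l ⊕ m) (l ⊕ m) ℝ} (hX : X.PosSemidef) (hXdiag : ∀ k, X k k = 1)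
    (hSX : cosumSlack A B α * X = 0) : X = vecMulVec cutVector cutVector := by
  let j : m := Classical.arbitrary m
  set N : ℝ := Fintype.card l + Fintype.card m
  have hrow : cutVector ᵥ* X = N • X (Sum.inr j) := by
    funext k
    have hk : cosumSlack A B α *ᵥ (fun i => X i k) = 0 := by
      funext i
      simpa [mul_apply, mulVec, dotProduct] using congrFun (congrFun hSX i) k
    exact cutVector_dotProduct_of_cosumSlack_mulVec_eq_zero hA hA1 hB hB1 hα hk j
  have hsymm : ∀ k, X (Sum.inr j) k = X k (Sum.inr j) := fun k => hX.isSymm.apply _ _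
  refine eq_vecMulVec_of_card_sq_le_dotProduct_mulVec hX hXdiag cutVector_sq (le_of_eq ?_)
  calc ((Fintype.card (l ⊕ m) : ℕ) : ℝ) ^ 2 = N * (N * X (Sum.inr j) (Sum.inr j)) := by
        simp [N, hXdiag, sq]
    _ = N * (cutVector ᵥ* X) (Sum.inr j) := by rw [hrow]; rfl
    _ = N * (X (Sum.inr j) ⬝ᵥ cutVector) := by
        simp only [vecMul, dotProduct, hsymm, mul_comm]
    _ = cutVector ⬝ᵥ X *ᵥ cutVector := by
        rw [dotProduct_mulVec, hrow, smul_dotProduct, smul_eq_mul]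

lemma isMaxCutOptimal_iff_eq_vecMulVec_cutVector [Nonempty m] (hA : A.PosSemidef)
    (hA1 : A *ᵥ (fun _ => 1) = (α * Fintype.card m) • fun _ => 1) (hB : B.PosDef)
    (hB1 : B *ᵥ (fun _ => 1) = (α * Fintype.card l) • fun _ => 1) (hα : 0 < α)
    {C : Matrix (l ⊕ m) (l ⊕ m) ℝ} {y : l ⊕ m → ℝ} {c : ℝ} (hc : 0 < c)
    (hC : diagonal y - C = c • cosumSlack A B α) {X : Matrix (l ⊕ m) (l ⊕ m) ℝ} :
    IsMaxCutOptimal C X ↔ X = vecMulVec cutVector cutVector := by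
  have hS : (diagonal y - C).PosSemidef :=
    hC ▸ (cosumSlack_posSemidef hA hA1 hB.posSemidef hB1 hα.le).smul hc.le
  have hSe : (diagonal y - C) *ᵥ cutVector = 0 := by
    rw [hC, smul_mulVec, cosumSlack_mulVec_cutVector hA1 hB1, smul_zero]
  refine ⟨fun hX => ?_, fun hX => hX ▸ isMaxCutOptimal_vecMulVec cutVector_sq hSe hS⟩
  have hSX := hX.diagonal_sub_mul_eq_zero cutVector_sq hSe hS
  rw [hC, smul_mul, smul_eq_zero] at hSX
  exact eq_vecMulVec_cutVector_of_cosumSlack_mul_eq_zero hA hA1 hB hB1 hα hX.1 hX.2.1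
    (hSX.resolve_left hc.ne')

lemma not_exists_isStrictlyComplementary_of_cosumSlack [Nonempty m] (hA : A.PosSemidef)
    (hA1 : A *ᵥ (fun _ => 1) = (α * Fintype.card m) • fun _ => 1) (hB : B.PosDef)
    (hB1 : B *ᵥ (fun _ => 1) = (α * Fintype.card l) • fun _ => 1) (hα : 0 < α)
    {C : Matrix (l ⊕ m) (l ⊕ m) ℝ} {y : l ⊕ m → ℝ} {c : ℝ} (hc : 0 < c)
    (hC : diagonal y - C = c • cosumSlack A B α) {h : l → ℝ} (hh0 : h ≠ 0) (hh : A *ᵥ h = 0)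
    (hsum : ∑ i, h i = 0) : ¬ ∃ X y, IsStrictlyComplementary C X y :=
  not_exists_isStrictlyComplementary cutVector_sq
    (by rw [hC, smul_mulVec, cosumSlack_mulVec_cutVector hA1 hB1, smul_zero])
    (hC ▸ (cosumSlack_posSemidef hA hA1 hB.posSemidef hB1 hα.le).smul hc.le)
    (fun X => (isMaxCutOptimal_iff_eq_vecMulVec_cutVector hA hA1 hB hB1 hα hc hC).1)
    (z := Sum.elim h fun _ => 0) (fun hz => hh0 (funext fun i => congrFun hz (Sum.inl i)))
    (by rw [cutVector_dotProduct_sumElim_zero, hsum, neg_zero])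
    (by rw [hC, smul_mulVec, cosumSlack_mulVec_sumElim_zero hh hsum, smul_zero])

end Cosum

theorem cosum_strict_complementarity_failure_general
    (nG nH : ℕ) (hnH : 1 ≤ nH)
    (wG : Fin nG → Fin nG → ℝ) (wH : Fin nH → Fin nH → ℝ)
    (LG : Matrix (Fin nG) (Fin nG) ℝ) (hLG : LG = lapMatrix wG)
    (LH : Matrix (Fin nH) (Fin nH) ℝ) (hLH : LH = lapMatrix wH)
    (μG μH : ℝ)
    -- `μG` is the largest eigenvalue of `L_G`:
    (hμG₁ : ((μG • (1 : Matrix (Fin nG) (Fin nG) ℝ)) - LG).PosSemidef)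
    (hμG₂ : ∃ h : Fin nG → ℝ, h ≠ 0 ∧ LG.mulVec h = μG • h)
    -- `μH` is the largest eigenvalue of `L_H`:
    (hμH₁ : ((μH • (1 : Matrix (Fin nH) (Fin nH) ℝ)) - LH).PosSemidef)
    (hineq : (nH : ℝ) * μH < (nG : ℝ) * μG)
    (α : ℝ) (hα : α = μG / nH)
    -- the cosum weights and the objective matrix `C` with `4 C = L_{G ∨ H}(w̄)`:
    (wbar : (Fin nG ⊕ Fin nH) → (Fin nG ⊕ Fin nH) → ℝ)
    (hwbar : wbar = fun u v =>
      Sum.elim (fun i => Sum.elim (fun j => wG i j) (fun _ => α) v)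
        (fun i => Sum.elim (fun _ => α) (fun j => wH i j) v) u)
    (C : Matrix (Fin nG ⊕ Fin nH) (Fin nG ⊕ Fin nH) ℝ)
    (hC : (4 : ℝ) • C = lapMatrix wbar)
    (Xstar : Matrix (Fin nG ⊕ Fin nH) (Fin nG ⊕ Fin nH) ℝ)
    (hXstar : Xstar = Matrix.vecMulVec
      (Sum.elim (fun _ => (-1 : ℝ)) (fun _ => (1 : ℝ)))
      (Sum.elim (fun _ => (-1 : ℝ)) (fun _ => (1 : ℝ))))
    (Sstar : Matrix (Fin nG ⊕ Fin nH) (Fin nG ⊕ Fin nH) ℝ)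
    (hSstar : Sstar = Matrix.fromBlocks
      ((μG • (1 : Matrix (Fin nG) (Fin nG) ℝ)) - LG)
      (α • Matrix.vecMulVec (fun _ => (1 : ℝ)) (fun _ => (1 : ℝ)))
      (α • Matrix.vecMulVec (fun _ => (1 : ℝ)) (fun _ => (1 : ℝ)))
      (((α * nG) • (1 : Matrix (Fin nH) (Fin nH) ℝ)) - LH))
    (ystar : (Fin nG ⊕ Fin nH) → ℝ)
    (hystar : ystar = Sum.elim (fun _ => 2 * α * nH) (fun _ => 2 * α * nG)) :
    -- primal feasibility/optimality/uniqueness for the MaxCut SDP with objective `C`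
    ((Xstar.PosSemidef ∧ ∀ i, Xstar i i = 1) ∧
      (∀ Y : Matrix (Fin nG ⊕ Fin nH) (Fin nG ⊕ Fin nH) ℝ,
        Y.PosSemidef → (∀ i, Y i i = 1) → (C * Y).trace ≤ (C * Xstar).trace) ∧
      (∀ X : Matrix (Fin nG ⊕ Fin nH) (Fin nG ⊕ Fin nH) ℝ,
        X.PosSemidef → (∀ i, X i i = 1) →
        ((∀ Y, Y.PosSemidef → (∀ i, Y i i = 1) → (C * Y).trace ≤ (C * X).trace) →
          X = Xstar))) ∧
    -- `(y*, S*)` is the dual slack pair for the Laplacian objective `4C`: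
    (Matrix.diagonal ystar - (4 : ℝ) • C = Sstar) ∧
    -- dual feasibility/optimality/uniqueness
    (Sstar.PosSemidef ∧
      (∀ y : (Fin nG ⊕ Fin nH) → ℝ, (Matrix.diagonal y - (4 : ℝ) • C).PosSemidef →
        (∑ i, ystar i) ≤ (∑ i, y i)) ∧
      (∀ y : (Fin nG ⊕ Fin nH) → ℝ, (Matrix.diagonal y - (4 : ℝ) • C).PosSemidef →
        ((∑ i, y i) ≤ (∑ i, ystar i) → y = ystar))) ∧
    -- the common kernel vector witnessing the failure of strict complementarity:
    (∀ h : Fin nG → ℝ, LG.mulVec h = μG • h →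
      (Xstar + Sstar).mulVec (Sum.elim h (fun _ => 0)) = 0) ∧
    -- strict complementarity fails for the MaxCut SDP with objective `C` and its dual:
    ¬ ∃ (X : Matrix (Fin nG ⊕ Fin nH) (Fin nG ⊕ Fin nH) ℝ) (y : (Fin nG ⊕ Fin nH) → ℝ),
        (X.PosSemidef ∧ (∀ i, X i i = 1) ∧
          ∀ Y, Y.PosSemidef → (∀ i, Y i i = 1) → (C * Y).trace ≤ (C * X).trace) ∧
        ((Matrix.diagonal y - C).PosSemidef ∧
          ∀ y', (Matrix.diagonal y' - C).PosSemidef → (∑ i, y i) ≤ (∑ i, y' i)) ∧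
        X * (Matrix.diagonal y - C) = 0 ∧
        (X + (Matrix.diagonal y - C)).PosDef := by
  subst hLG hLH hwbar hXstar hSstar
  have : Nonempty (Fin nH) := ⟨⟨0, hnH⟩⟩
  have hnH' : (0 : ℝ) < nH := by exact_mod_cast hnH
  have hμH : 0 ≤ μH := nonneg_of_posSemidef_smul_one_sub (lapMatrix_mulVec_one wH) hμH₁
  have hμG : 0 < μG := pos_of_mul_pos_right (by nlinarith) (Nat.cast_nonneg nG)
  have hα' : 0 < α := hα ▸ div_pos hμG hnH'
  have hμGα : μG = α * nH := by rw [hα, div_mul_cancel₀ _ hnH'.ne']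
  have hB := posDef_smul_one_sub_of_lt hμH₁ (d := α * nG) (by rw [hμGα] at hineq; nlinarith)
  have hA1 : (μG • 1 - lapMatrix wG) *ᵥ (fun _ => 1) =
      (α * Fintype.card (Fin nH)) • fun _ => 1 := by
    rw [smul_one_sub_lapMatrix_mulVec_one, Fintype.card_fin, hμGα]
  have hB1 : ((α * nG) • 1 - lapMatrix wH) *ᵥ (fun _ => 1) =
      (α * Fintype.card (Fin nG)) • fun _ => 1 := by
    rw [smul_one_sub_lapMatrix_mulVec_one, Fintype.card_fin]
  have hS : diagonal ystar - (4 : ℝ) • C =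
      cosumSlack (μG • 1 - lapMatrix wG) ((α * nG) • 1 - lapMatrix wH) α := by
    rw [hystar, hC, hμGα]
    simpa using diagonal_sub_lapMatrix_cosum wG wH α
  have hSe := hS ▸ cosumSlack_mulVec_cutVector hA1 hB1
  -- `(y*, S*)` certifies the objective `4C`; the objective `C` is certified by `(y*/4, S*/4)`.
  have hC₀ : diagonal ((4 : ℝ)⁻¹ • ystar) - C =
      (4 : ℝ)⁻¹ • cosumSlack (μG • 1 - lapMatrix wG) ((α * nG) • 1 - lapMatrix wH) α := by
    rw [← hS, smul_sub, diagonal_smul, smul_smul]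
    norm_num
  have hopt X := isMaxCutOptimal_iff_eq_vecMulVec_cutVector (X := X) hμG₁ hA1 hB hB1 hα'
    (by norm_num) hC₀
  have hsum : ∀ h, lapMatrix wG *ᵥ h = μG • h → ∑ i, h i = 0 := fun h hh =>
    sum_eq_zero_of_mulVec_eq_zero hμG₁.isSymm hA1 (by simp [← hμGα, hμG.ne'])
      (smul_one_sub_mulVec_eq_zero hh)
  obtain ⟨hXpsd, hXdiag, hXopt⟩ := (hopt _).2 rfl
  obtain ⟨h, hh0, hh⟩ := hμG₂
  exact ⟨⟨⟨hXpsd, hXdiag⟩, hXopt, fun X hX hXd hXo => (hopt X).1 ⟨hX, hXd, hXo⟩⟩, hS,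
    ⟨cosumSlack_posSemidef hμG₁ hA1 hB.posSemidef hB1 hα'.le,
      fun y hy => sum_le_sum_of_posSemidef_diagonal_sub cutVector_sq hSe hy,
      fun y hy hle => eq_of_posSemidef_diagonal_sub_of_sum_le cutVector_sq hSe hy hle⟩,
    fun h hh => vecMulVec_cutVector_add_cosumSlack_mulVec_sumElim_zero
      (smul_one_sub_mulVec_eq_zero hh) (hsum h hh),
    not_exists_isStrictlyComplementary_of_cosumSlack hμG₁ hA1 hB hB1 hα' (by norm_num) hC₀ hh0
      (smul_one_sub_mulVec_eq_zero hh) (hsum h hh)⟩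

/-- Laurent–Poljak style failure of strict complementarity for cosums `G ∨ H`:
with `4C` the weighted Laplacian of the cosum (weights `wG`, `wH` on the two
parts and `α = μG / nH` on all cross edges), `X* = (−𝟙_G ⊕ 𝟙_H)(−𝟙_G ⊕ 𝟙_H)ᵀ`
is the unique primal optimal solution, `(y*, S*)` is the unique dual optimal
solution (for the Laplacian objective `4C`), `(X* + S*)(h ⊕ 0) = 0` for every
`μG`-eigenvector `h` of `L_G`, and strict complementarity fails. -/
theorem cosum_strict_complementarity_failure
    (nG nH : ℕ) (hnG : 1 ≤ nG) (hnH : 1 ≤ nH)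
    (G : SimpleGraph (Fin nG)) (H : SimpleGraph (Fin nH)) (hH : H.Connected)
    (wG : Fin nG → Fin nG → ℝ) (wH : Fin nH → Fin nH → ℝ)
    (hwGsymm : ∀ i j, wG i j = wG j i) (hwHsymm : ∀ i j, wH i j = wH j i)
    (hwGpos : ∀ i j, G.Adj i j → 0 < wG i j)
    (hwGsupp : ∀ i j, ¬ G.Adj i j → wG i j = 0)
    (hwHpos : ∀ i j, H.Adj i j → 0 < wH i j)
    (hwHsupp : ∀ i j, ¬ H.Adj i j → wH i j = 0)
    (LG : Matrix (Fin nG) (Fin nG) ℝ) (hLG : LG = lapMatrix wG)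
    (LH : Matrix (Fin nH) (Fin nH) ℝ) (hLH : LH = lapMatrix wH)
    (μG μH : ℝ)
    -- `μG` is the largest eigenvalue of `L_G`:
    (hμG₁ : ((μG • (1 : Matrix (Fin nG) (Fin nG) ℝ)) - LG).PosSemidef)
    (hμG₂ : ∃ h : Fin nG → ℝ, h ≠ 0 ∧ LG.mulVec h = μG • h)
    -- `μH` is the largest eigenvalue of `L_H`:
    (hμH₁ : ((μH • (1 : Matrix (Fin nH) (Fin nH) ℝ)) - LH).PosSemidef)
    (hμH₂ : ∃ h : Fin nH → ℝ, h ≠ 0 ∧ LH.mulVec h = μH • h)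
    (hineq : (nH : ℝ) * μH < (nG : ℝ) * μG)
    (α : ℝ) (hα : α = μG / nH)
    -- the cosum weights and the objective matrix `C` with `4 C = L_{G ∨ H}(w̄)`:
    (wbar : (Fin nG ⊕ Fin nH) → (Fin nG ⊕ Fin nH) → ℝ)
    (hwbar : wbar = fun u v =>
      Sum.elim (fun i => Sum.elim (fun j => wG i j) (fun _ => α) v)
        (fun i => Sum.elim (fun _ => α) (fun j => wH i j) v) u)
    (C : Matrix (Fin nG ⊕ Fin nH) (Fin nG ⊕ Fin nH) ℝ)
    (hC : (4 : ℝ) • C = lapMatrix wbar)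
    (Xstar : Matrix (Fin nG ⊕ Fin nH) (Fin nG ⊕ Fin nH) ℝ)
    (hXstar : Xstar = Matrix.vecMulVec
      (Sum.elim (fun _ => (-1 : ℝ)) (fun _ => (1 : ℝ)))
      (Sum.elim (fun _ => (-1 : ℝ)) (fun _ => (1 : ℝ))))
    (Sstar : Matrix (Fin nG ⊕ Fin nH) (Fin nG ⊕ Fin nH) ℝ)
    (hSstar : Sstar = Matrix.fromBlocks
      ((μG • (1 : Matrix (Fin nG) (Fin nG) ℝ)) - LG)
      (α • Matrix.vecMulVec (fun _ => (1 : ℝ)) (fun _ => (1 : ℝ)))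
      (α • Matrix.vecMulVec (fun _ => (1 : ℝ)) (fun _ => (1 : ℝ)))
      (((α * nG) • (1 : Matrix (Fin nH) (Fin nH) ℝ)) - LH))
    (ystar : (Fin nG ⊕ Fin nH) → ℝ)
    (hystar : ystar = Sum.elim (fun _ => 2 * α * nH) (fun _ => 2 * α * nG)) :
    -- primal feasibility/optimality/uniqueness for the MaxCut SDP with objective `C`
    ((Xstar.PosSemidef ∧ ∀ i, Xstar i i = 1) ∧
      (∀ Y : Matrix (Fin nG ⊕ Fin nH) (Fin nG ⊕ Fin nH) ℝ,
        Y.PosSemidef → (∀ i, Y i i = 1) → (C * Y).trace ≤ (C * Xstar).trace) ∧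
      (∀ X : Matrix (Fin nG ⊕ Fin nH) (Fin nG ⊕ Fin nH) ℝ,
        X.PosSemidef → (∀ i, X i i = 1) →
        ((∀ Y, Y.PosSemidef → (∀ i, Y i i = 1) → (C * Y).trace ≤ (C * X).trace) →
          X = Xstar))) ∧
    -- `(y*, S*)` is the dual slack pair for the Laplacian objective `4C`:
    (Matrix.diagonal ystar - (4 : ℝ) • C = Sstar) ∧
    -- dual feasibility/optimality/uniqueness
    (Sstar.PosSemidef ∧
      (∀ y : (Fin nG ⊕ Fin nH) → ℝ, (Matrix.diagonal y - (4 : ℝ) • C).PosSemidef →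
        (∑ i, ystar i) ≤ (∑ i, y i)) ∧
      (∀ y : (Fin nG ⊕ Fin nH) → ℝ, (Matrix.diagonal y - (4 : ℝ) • C).PosSemidef →
        ((∑ i, y i) ≤ (∑ i, ystar i) → y = ystar))) ∧
    -- the common kernel vector witnessing the failure of strict complementarity:
    (∀ h : Fin nG → ℝ, LG.mulVec h = μG • h →
      (Xstar + Sstar).mulVec (Sum.elim h (fun _ => 0)) = 0) ∧
    -- strict complementarity fails for the MaxCut SDP with objective `C` and its dual:
    ¬ ∃ (X : Matrix (Fin nG ⊕ Fin nH) (Fin nG ⊕ Fin nH) ℝ) (y : (Fin nG ⊕ Fin nH) → ℝ),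
        (X.PosSemidef ∧ (∀ i, X i i = 1) ∧
          ∀ Y, Y.PosSemidef → (∀ i, Y i i = 1) → (C * Y).trace ≤ (C * X).trace) ∧
        ((Matrix.diagonal y - C).PosSemidef ∧
          ∀ y', (Matrix.diagonal y' - C).PosSemidef → (∑ i, y i) ≤ (∑ i, y' i)) ∧
        X * (Matrix.diagonal y - C) = 0 ∧
        (X + (Matrix.diagonal y - C)).PosDef :=
  cosum_strict_complementarity_failure_general nG nH hnH wG wH LG hLG LH hLH μG μH hμG₁ hμG₂ hμH₁
    hineq α hα wbar hwbar C hC Xstar hXstar Sstar hSstar ystar hystar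
end

section
/- Let n ≥ 3, ȳ ∈ ℝⁿ, and S̄ positive semidefinite with Null(S̄) = span{𝟙, h} for some h orthogonal to 𝟙 having at least three distinct coordinates. Set C = Diag(ȳ) − S̄. Then 𝟙𝟙ᵀ is the unique optimal solution of max{Tr(CX) : diag(X) = 𝟙, X ⪰ 0}, (ȳ, S̄) is the unique optimal dual solution, and strict complementarity fails for this SDP. -/
/-!
Put `S̄ = Diag ȳ − C` and `J = 𝟙𝟙ᵀ`. For feasible `X`, `Tr(CX) = ∑ ȳ − Tr(S̄X)` with `Tr(S̄X) ≥ 0`,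
and `S̄𝟙 = 0` gives `Tr(S̄J) = 0`; so `J` and `ȳ` are optimal with equal values and every optimal
pair is complementary. The columns of an optimal `X` thus lie in `Null S̄ = span{𝟙, h}`; being
symmetric, `X_ij = α + β(h_i + h_j) + γ h_i h_j`, and the unit diagonal makes
`α − 1 + 2βt + γt²` vanish at three distinct values of `h`, whence `X = J`. An optimal `y` has
`(Diag y − C)𝟙 = 0`, i.e. `y = C𝟙 = ȳ`. Finally `J + S̄` kills `h ≠ 0` because `h ⊥ 𝟙`.
-/

open Matrix

lemma quadratic_coeffs_eq_zero_of_three_roots {K : Type*} [Field K] {a b c x y z : K}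
    (hxy : x ≠ y) (hxz : x ≠ z) (hyz : y ≠ z) (hx : a + b * x + c * x ^ 2 = 0)
    (hy : a + b * y + c * y ^ 2 = 0) (hz : a + b * z + c * z ^ 2 = 0) : a = 0 ∧ b = 0 ∧ c = 0 := by
  have hxy' : b + c * (x + y) = 0 := by
    apply mul_left_cancel₀ (sub_ne_zero.mpr hxy)
    linear_combination hx - hy
  have hxz' : b + c * (x + z) = 0 := by
    apply mul_left_cancel₀ (sub_ne_zero.mpr hxz)
    linear_combination hx - hz
  have hc : c = 0 := by
    apply mul_left_cancel₀ (sub_ne_zero.mpr hyz)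
    linear_combination hxy' - hxz'
  have hb : b = 0 := by linear_combination hxy' - (x + y) * hc
  exact ⟨by linear_combination hx - x * hb - x ^ 2 * hc, hb, hc⟩

namespace Matrix

section PosSemidef

open scoped MatrixOrder ComplexOrder

variable {n 𝕜 : Type*} [Fintype n] [RCLike 𝕜]

lemma PosSemidef.trace_mul_nonneg_s9 {A B : Matrix n n 𝕜} (hA : A.PosSemidef) (hB : B.PosSemidef) :
    0 ≤ (A * B).trace := by
  classical
  obtain ⟨D, rfl⟩ := CStarAlgebra.nonneg_iff_eq_star_mul_self.mp hB.nonneg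
  rw [star_eq_conjTranspose, ← mul_assoc, trace_mul_comm, ← mul_assoc]
  exact (hA.mul_mul_conjTranspose_same D).trace_nonneg

lemma PosSemidef.mul_eq_zero_of_trace_mul_eq_zero_s9 {A B : Matrix n n 𝕜} (hA : A.PosSemidef)
    (hB : B.PosSemidef) (h : (A * B).trace = 0) : A * B = 0 := by
  classical
  obtain ⟨D, rfl⟩ := CStarAlgebra.nonneg_iff_eq_star_mul_self.mp hA.nonneg
  obtain ⟨E, rfl⟩ := CStarAlgebra.nonneg_iff_eq_star_mul_self.mp hB.nonneg
  simp only [star_eq_conjTranspose] at h ⊢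
  -- `Tr(DᴴD EᴴE) = Tr((DEᴴ)ᴴ(DEᴴ))`
  have hDE : D * Eᴴ = 0 := by
    rw [← trace_conjTranspose_mul_self_eq_zero_iff, conjTranspose_mul, conjTranspose_conjTranspose,
      ← h, mul_assoc, trace_mul_comm]
    simp only [mul_assoc]
  rw [mul_assoc, ← mul_assoc D, hDE, zero_mul, mul_zero]

lemma posSemidef_vecMulVec_one : (vecMulVec (fun _ : n => (1 : 𝕜)) fun _ => 1).PosSemidef := by
  simpa only [Pi.star_def, star_one] using posSemidef_vecMulVec_self_star (fun _ : n => (1 : 𝕜))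

lemma mul_vecMulVec_one_eq_zero_iff {M : Matrix n n 𝕜} {a : n → 𝕜} :
    M * vecMulVec a (fun _ : n => (1 : 𝕜)) = 0 ↔ M *ᵥ a = 0 := by
  simp only [mul_vecMulVec, ← Matrix.ext_iff, funext_iff, vecMulVec_apply, mul_one, zero_apply,
    Pi.zero_apply]
  exact ⟨fun h i => h i i, fun h i _ => h i⟩

lemma not_posDef_vecMulVec_one_add {S : Matrix n n 𝕜} {v : n → 𝕜} (hSv : S *ᵥ v = 0)
    (hsum : ∑ i, v i = 0) (hv : v ≠ 0) : ¬ (vecMulVec (fun _ => 1) (fun _ => 1) + S).PosDef := by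
  intro hpos
  have hker : (vecMulVec (fun _ => 1) (fun _ => 1) + S) *ᵥ v = 0 := by
    ext i
    simp [add_mulVec, hSv, vecMulVec_mulVec, dotProduct, hsum]
  simpa [hker] using hpos.dotProduct_mulVec_pos hv

end PosSemidef

section SpanPair

variable {K ι : Type*} [Field K]

lemma IsSymm.exists_symmetric_form {X : Matrix ι ι K} {h : ι → K} {a b : ι → K}
    (hsymm : X.IsSymm) (hX : ∀ i j, X i j = a j + b j * h i) {i₀ j₀ : ι} (hne : h i₀ ≠ h j₀) :
    ∃ α β γ : K, ∀ i j, X i j = α + β * (h i + h j) + γ * h i * h j := by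
  have hswap : ∀ i j, a j + b j * h i = a i + b i * h j := fun i j => by
    rw [← hX, ← hX, hsymm.apply]
  set β := (a i₀ - a j₀) / (h i₀ - h j₀)
  set γ := (b i₀ - b j₀) / (h i₀ - h j₀)
  have hb : ∀ i, b i = β + γ * h i := fun i => by
    simp only [β, γ]
    field_simp
    linear_combination hswap i j₀ - hswap i i₀
  refine ⟨a i₀ - β * h i₀, β, γ, fun i j => ?_⟩
  rw [hX]
  linear_combination -hswap j i₀ + h j * hb i₀ + (h i - h i₀) * hb j

lemma IsSymm.eq_vecMulVec_one_of_cols_mem_span_pair [CharZero K] {X : Matrix ι ι K} {h : ι → K}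
    (hsymm : X.IsSymm) (hdiag : ∀ i, X i i = 1)
    (hcol : ∀ j, Xᵀ j ∈ Submodule.span K {fun _ => 1, h})
    (hdist : ∃ i j k, h i ≠ h j ∧ h i ≠ h k ∧ h j ≠ h k) :
    X = vecMulVec (fun _ => 1) (fun _ => 1) := by
  obtain ⟨i₀, j₀, k₀, h01, h02, h12⟩ := hdist
  choose a b hab using fun j => Submodule.mem_span_pair.mp (hcol j)
  have hX : ∀ i j, X i j = a j + b j * h i := fun i j => by
    simpa using (congrFun (hab j) i).symm
  obtain ⟨α, β, γ, hform⟩ := hsymm.exists_symmetric_form hX h01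
  have hroot : ∀ i, (α - 1) + 2 * β * h i + γ * h i ^ 2 = 0 := fun i => by
    linear_combination hdiag i - hform i i
  obtain ⟨hα, hβ, hγ⟩ :=
    quadratic_coeffs_eq_zero_of_three_roots h01 h02 h12 (hroot i₀) (hroot j₀) (hroot k₀)
  have hβ' : β = 0 := by simpa using hβ
  ext i j
  rw [hform, vecMulVec_apply]
  linear_combination hα + (h i + h j) * hβ' + h i * h j * hγ

end SpanPair

end Matrix

namespace MaxCutSDP

variable {ι : Type*} [Fintype ι] [DecidableEq ι] {C X : Matrix ι ι ℝ} {y : ι → ℝ}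

lemma trace_diagonal_sub_mul (hXd : ∀ i, X i i = 1) :
    ((diagonal y - C) * X).trace = ∑ i, y i - (C * X).trace := by
  simp [sub_mul, trace, diagonal_mul, hXd]

theorem weak_duality (hy : (diagonal y - C).PosSemidef) (hX : X.PosSemidef)
    (hXd : ∀ i, X i i = 1) : (C * X).trace ≤ ∑ i, y i := by
  have := hy.trace_mul_nonneg_s9 hX
  rw [trace_diagonal_sub_mul hXd] at this
  linarith

theorem complementary_slackness (hy : (diagonal y - C).PosSemidef) (hX : X.PosSemidef)
    (hXd : ∀ i, X i i = 1) (hle : ∑ i, y i ≤ (C * X).trace) : (diagonal y - C) * X = 0 :=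
  hy.mul_eq_zero_of_trace_mul_eq_zero_s9 hX <| by
    rw [trace_diagonal_sub_mul hXd]
    linarith [weak_duality hy hX hXd]

lemma eq_mulVec_one_of_mulVec_one_eq_zero (hy : (diagonal y - C) *ᵥ (fun _ => 1) = 0) :
    y = C *ᵥ (fun _ => 1) := by
  ext i
  simpa [sub_mulVec, mulVec_diagonal, sub_eq_zero] using congrFun hy i

lemma trace_mul_vecMulVec_one (hy : (diagonal y - C) *ᵥ (fun _ => 1) = 0) :
    (C * vecMulVec (fun _ => 1) (fun _ => 1)).trace = ∑ i, y i := by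
  have := trace_diagonal_sub_mul (C := C) (y := y) (X := vecMulVec (fun _ => 1) (fun _ => 1))
    fun _ => one_mul 1
  rw [mul_vecMulVec_one_eq_zero_iff.mpr hy, trace_zero] at this
  linarith

theorem eq_vecMulVec_one_of_optimal {h : ι → ℝ} (hy : (diagonal y - C).PosSemidef)
    (hker : ∀ v, (diagonal y - C) *ᵥ v = 0 → v ∈ Submodule.span ℝ {fun _ => 1, h})
    (hdist : ∃ i j k, h i ≠ h j ∧ h i ≠ h k ∧ h j ≠ h k)
    (hX : X.PosSemidef) (hXd : ∀ i, X i i = 1) (hle : ∑ i, y i ≤ (C * X).trace) :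
    X = vecMulVec (fun _ => 1) (fun _ => 1) := by
  have hSX := complementary_slackness hy hX hXd hle
  refine (isHermitian_iff_isSymm.mp hX.isHermitian).eq_vecMulVec_one_of_cols_mem_span_pair hXd
    (fun j => hker _ ?_) hdist
  ext k
  simpa [mulVec, dotProduct, mul_apply] using congrFun (congrFun hSX k) j

theorem eq_of_optimal {y' : ι → ℝ} (hy : (diagonal y - C) *ᵥ (fun _ => 1) = 0)
    (hy' : (diagonal y' - C).PosSemidef) (hle : ∑ i, y' i ≤ ∑ i, y i) : y' = y := by
  have hJ := complementary_slackness hy' posSemidef_vecMulVec_one (fun _ => one_mul 1)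
    (by rwa [trace_mul_vecMulVec_one hy])
  rw [mul_vecMulVec_one_eq_zero_iff] at hJ
  rw [eq_mulVec_one_of_mulVec_one_eq_zero hJ, eq_mulVec_one_of_mulVec_one_eq_zero hy]

end MaxCutSDP

open MaxCutSDP

theorem strict_complementarity_failure_high_rank_general (n : ℕ)
    (ybar : Fin n → ℝ) (Sbar : Matrix (Fin n) (Fin n) ℝ)
    (hSbar : Sbar.PosSemidef)
    (h : Fin n → ℝ) (hperp : ∑ i, h i = 0)
    (hdist : ∃ i j k : Fin n, h i ≠ h j ∧ h i ≠ h k ∧ h j ≠ h k)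
    (hnull : {v : Fin n → ℝ | Sbar.mulVec v = 0} =
      (Submodule.span ℝ {(fun _ => 1 : Fin n → ℝ), h} : Set (Fin n → ℝ)))
    (C : Matrix (Fin n) (Fin n) ℝ) (hC : C = Matrix.diagonal ybar - Sbar)
    (J : Matrix (Fin n) (Fin n) ℝ)
    (hJ : J = Matrix.vecMulVec (fun _ => (1:ℝ)) (fun _ => (1:ℝ))) :
    -- 𝟙𝟙ᵀ is the unique primal optimal solution
    ((J.PosSemidef ∧ (∀ i, J i i = 1)) ∧
      (∀ Y : Matrix (Fin n) (Fin n) ℝ, Y.PosSemidef → (∀ i, Y i i = 1) →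
        (C * Y).trace ≤ (C * J).trace) ∧
      (∀ X : Matrix (Fin n) (Fin n) ℝ, X.PosSemidef → (∀ i, X i i = 1) →
        (∀ Y, Y.PosSemidef → (∀ i, Y i i = 1) → (C * Y).trace ≤ (C * X).trace) →
          X = J)) ∧
    -- ȳ (with slack S̄) is the unique dual optimal solution
    ((Matrix.diagonal ybar - C = Sbar) ∧ Sbar.PosSemidef ∧
      (∀ y : Fin n → ℝ, (Matrix.diagonal y - C).PosSemidef →
        (∑ i, ybar i) ≤ (∑ i, y i)) ∧
      (∀ y : Fin n → ℝ, (Matrix.diagonal y - C).PosSemidef →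
        (∑ i, y i) ≤ (∑ i, ybar i) → y = ybar)) ∧
    -- strict complementarity fails
    ¬ ∃ (X : Matrix (Fin n) (Fin n) ℝ) (y : Fin n → ℝ),
        (X.PosSemidef ∧ (∀ i, X i i = 1) ∧
          ∀ Y, Y.PosSemidef → (∀ i, Y i i = 1) → (C * Y).trace ≤ (C * X).trace) ∧
        ((Matrix.diagonal y - C).PosSemidef ∧
          ∀ y', (Matrix.diagonal y' - C).PosSemidef → (∑ i, y i) ≤ (∑ i, y' i)) ∧
        X * (Matrix.diagonal y - C) = 0 ∧
        (X + (Matrix.diagonal y - C)).PosDef := by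
  subst hJ
  obtain rfl : Sbar = diagonal ybar - C := by rw [hC, sub_sub_cancel]
  have hker (v : Fin n → ℝ) := Set.ext_iff.mp hnull v
  have hone := (hker _).mpr (Submodule.subset_span (Set.mem_insert _ _))
  have hh := (hker h).mpr (Submodule.subset_span (Set.mem_insert_of_mem _ rfl))
  have hCJ := trace_mul_vecMulVec_one hone
  have primal_unique : ∀ X : Matrix (Fin n) (Fin n) ℝ, X.PosSemidef → (∀ i, X i i = 1) →
      (∀ Y, Y.PosSemidef → (∀ i, Y i i = 1) → (C * Y).trace ≤ (C * X).trace) →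
        X = vecMulVec (fun _ => 1) (fun _ => 1) := fun X hX hXd hXopt =>
    eq_vecMulVec_one_of_optimal hSbar (fun v => (hker v).mp) hdist hX hXd
      (hCJ ▸ hXopt _ posSemidef_vecMulVec_one fun _ => one_mul 1)
  refine ⟨⟨⟨posSemidef_vecMulVec_one, fun _ => one_mul 1⟩,
      fun Y hY hYd => hCJ ▸ weak_duality hSbar hY hYd, primal_unique⟩,
    ⟨rfl, hSbar, fun y hy => hCJ ▸ weak_duality hy posSemidef_vecMulVec_one fun _ => one_mul 1,
      fun y hy hle => eq_of_optimal hone hy hle⟩, ?_⟩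
  rintro ⟨X, y, ⟨hX, hXd, hXopt⟩, ⟨hy, hyopt⟩, -, hpos⟩
  rw [primal_unique X hX hXd hXopt, eq_of_optimal hone hy (hyopt ybar hSbar)] at hpos
  obtain ⟨i, j, -, hij, -, -⟩ := hdist
  exact not_posDef_vecMulVec_one_add hh hperp (fun h0 => hij (by simp [h0])) hpos

/-- If `C = Diag(ȳ) − S̄` with `S̄ ⪰ 0`, `Null(S̄) = span{𝟙, h}`, `h ⊥ 𝟙` having
at least three distinct coordinates, then `𝟙𝟙ᵀ` is the unique primal optimal
solution of the MaxCut SDP, `ȳ` is the unique dual optimal solution (with slack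
`S̄`), and strict complementarity fails. -/
theorem strict_complementarity_failure_high_rank (n : ℕ) (hn : 3 ≤ n)
    (ybar : Fin n → ℝ) (Sbar : Matrix (Fin n) (Fin n) ℝ)
    (hSbar : Sbar.PosSemidef)
    (h : Fin n → ℝ) (hperp : ∑ i, h i = 0)
    (hdist : ∃ i j k : Fin n, h i ≠ h j ∧ h i ≠ h k ∧ h j ≠ h k)
    (hnull : {v : Fin n → ℝ | Sbar.mulVec v = 0} =
      (Submodule.span ℝ {(fun _ => 1 : Fin n → ℝ), h} : Set (Fin n → ℝ)))
    (C : Matrix (Fin n) (Fin n) ℝ) (hC : C = Matrix.diagonal ybar - Sbar)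
    (J : Matrix (Fin n) (Fin n) ℝ)
    (hJ : J = Matrix.vecMulVec (fun _ => (1:ℝ)) (fun _ => (1:ℝ))) :
    -- 𝟙𝟙ᵀ is the unique primal optimal solution
    ((J.PosSemidef ∧ (∀ i, J i i = 1)) ∧
      (∀ Y : Matrix (Fin n) (Fin n) ℝ, Y.PosSemidef → (∀ i, Y i i = 1) →
        (C * Y).trace ≤ (C * J).trace) ∧
      (∀ X : Matrix (Fin n) (Fin n) ℝ, X.PosSemidef → (∀ i, X i i = 1) →
        (∀ Y, Y.PosSemidef → (∀ i, Y i i = 1) → (C * Y).trace ≤ (C * X).trace) →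
          X = J)) ∧
    -- ȳ (with slack S̄) is the unique dual optimal solution
    ((Matrix.diagonal ybar - C = Sbar) ∧ Sbar.PosSemidef ∧
      (∀ y : Fin n → ℝ, (Matrix.diagonal y - C).PosSemidef →
        (∑ i, ybar i) ≤ (∑ i, y i)) ∧
      (∀ y : Fin n → ℝ, (Matrix.diagonal y - C).PosSemidef →
        (∑ i, y i) ≤ (∑ i, ybar i) → y = ybar)) ∧
    -- strict complementarity fails
    ¬ ∃ (X : Matrix (Fin n) (Fin n) ℝ) (y : Fin n → ℝ),
        (X.PosSemidef ∧ (∀ i, X i i = 1) ∧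
          ∀ Y, Y.PosSemidef → (∀ i, Y i i = 1) → (C * Y).trace ≤ (C * X).trace) ∧
        ((Matrix.diagonal y - C).PosSemidef ∧
          ∀ y', (Matrix.diagonal y' - C).PosSemidef → (∑ i, y i) ≤ (∑ i, y' i)) ∧
        X * (Matrix.diagonal y - C) = 0 ∧
        (X + (Matrix.diagonal y - C)).PosDef :=
  strict_complementarity_failure_high_rank_general n ybar Sbar hSbar h hperp hdist hnull C hC J hJ
end

section
/- Let n ≥ 3, h ∈ ℝⁿ with at least three distinct coordinates, and suppose X ∈ Sym(n) satisfies diag(X) = 𝟙, X ⪰ 0, and Image(X) ⊆ span{𝟙, h} with h ⊥ 𝟙. Then X = 𝟙𝟙ᵀ. -/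
open Matrix

/-- If `X ∈ ℰ_n` has range contained in `span{𝟙, h}` where `h ⊥ 𝟙` has at least
three distinct coordinates, then `X = 𝟙𝟙ᵀ`. -/
theorem elliptope_range_span_one_h (n : ℕ) (hn : 3 ≤ n)
    (h : Fin n → ℝ) (hperp : ∑ i, h i = 0)
    (hdist : ∃ i j k : Fin n, h i ≠ h j ∧ h i ≠ h k ∧ h j ≠ h k)
    (X : Matrix (Fin n) (Fin n) ℝ) (hX : X.PosSemidef) (hdiag : ∀ i, X i i = 1)
    (hrange : ∀ v : Fin n → ℝ,
      X.mulVec v ∈ Submodule.span ℝ {(fun _ => 1 : Fin n → ℝ), h}) :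
    X = Matrix.vecMulVec (fun _ => (1:ℝ)) (fun _ => (1:ℝ)) := by
  have hsymm : ∀ i j, X i j = X j i := fun i j => by simpa using hX.isHermitian.apply j i
  have key : ∀ j : Fin n, ∃ d : ℝ, ∀ i, X i j = 1 + d * (h i - h j) := by
    intro j
    obtain ⟨c, d, hcd⟩ := Submodule.mem_span_pair.mp (hrange (Pi.single j 1))
    have hcol : ∀ i, X i j = c + d * h i := by
      intro i
      have := congrFun hcd i
      simp [Matrix.mulVec_single, Pi.add_apply, Pi.smul_apply] at this
      linarith [this]
    have hc : c + d * h j = 1 := by rw [← hcol j]; exact hdiag j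
    exact ⟨d, fun i => by have := hcol i; nlinarith [hcol i, hc]⟩
  choose d hd using key
  have hopp : ∀ i j, h i ≠ h j → d i = -d j := by
    intro i j hij
    have e3 : 1 + d j * (h i - h j) = 1 + d i * (h j - h i) := by
      rw [← hd j i, ← hd i j]; exact hsymm i j
    have e4 : (d i + d j) * (h i - h j) = 0 := by linear_combination e3
    rcases mul_eq_zero.mp e4 with h1 | h2
    · linarith
    · exact absurd (by linarith : h i = h j) hij
  obtain ⟨p, q, r, hpq, hpr, hqr⟩ := hdist
  have dq : d q = 0 := by
    have h1 := hopp p q hpq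
    have h2 := hopp p r hpr
    have h3 := hopp q r hqr
    linarith
  have dp : d p = 0 := by have := hopp p q hpq; linarith
  have dall : ∀ i, d i = 0 := by
    intro i
    by_cases hip : h i = h p
    · have : h i ≠ h q := hip ▸ hpq
      have := hopp i q this; linarith
    · have := hopp i p hip; linarith
  ext i j
  rw [hd j i, dall j, Matrix.vecMulVec_apply]
  ring
end

section
/- Let n ≥ 2. The set of matrices X in the boundary of the positive semidefinite cone PSD(n) with rank(X) ≤ n − 2 has H_{d−1}-measure zero, where d = n(n+1)/2 is the dimension of PSD(n); equivalently, the property rank(X) = n−1 holds generically on bd(PSD(n)). -/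
/-!
If the rows of a symmetric matrix `Y` indexed by a set `t` of size `m` span its row space,
then, listing `t` first, `Y = B A Bᵀ` with `B = [1; C]` and `A` the principal `t × t` block.
Hence the symmetric matrices of rank `≤ n - 2` lie in finitely many smooth images of a space of
dimension `(n - 1)(n - 2)/2 + 2(n - 2) = d - 3`, so their Hausdorff dimension is below `d - 1`.
The boundary of the PSD cone consists of symmetric matrices.
-/

open MeasureTheory Matrix Set Submodule
open scoped NNReal

lemma Finset.exists_equiv_sum_range_inl {ι κ : Type*} [Fintype ι] [Fintype κ] {m : ℕ}
    (t : Finset ι) (ht : t.card = m) (hcard : Fintype.card ι = m + Fintype.card κ) :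
    ∃ σ : Fin m ⊕ κ ≃ ι, Set.range (σ ∘ Sum.inl) = t := by
  classical
  let e₁ : Fin m ≃ {i // i ∈ t} := (Fintype.equivFinOfCardEq (by simpa using ht)).symm
  let e₂ : κ ≃ {i // i ∉ t} := Fintype.equivOfCardEq (by
    rw [Fintype.card_subtype_compl, Fintype.card_coe, ht]; omega)
  refine ⟨(e₁.sumCongr e₂).trans (Equiv.sumCompl (· ∈ t)), Set.ext fun i => ⟨?_, fun hi => ?_⟩⟩
  · rintro ⟨k, rfl⟩
    simp
  · exact ⟨e₁.symm ⟨i, hi⟩, by simp⟩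

namespace Matrix

lemma exists_finset_card_eq_row_mem_span {ι n K : Type*} [Fintype ι] [Fintype n] [Field K]
    (M : Matrix ι n K) {m : ℕ} (hrank : M.rank ≤ m) (hm : m ≤ Fintype.card ι) :
    ∃ t : Finset ι, t.card = m ∧ ∀ i, M.row i ∈ span K (M.row '' t) := by
  classical
  obtain ⟨κ, a, ha, hspan, hli⟩ := exists_linearIndependent' K M.row
  have : Finite κ := Finite.of_injective a ha
  have : Fintype κ := Fintype.ofFinite κ
  have hcard : (Finset.univ.image a).card ≤ m := by
    rw [Finset.card_image_of_injective _ ha, Finset.card_univ, ← finrank_span_eq_card hli, hspan,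
      ← rank_eq_finrank_span_row]
    exact hrank
  obtain ⟨t, hat, -, htm⟩ := Finset.exists_subsuperset_card_eq (Finset.subset_univ _) hcard
    (by simpa using hm)
  refine ⟨t, htm, fun i => ?_⟩
  have hi : M i ∈ span K (range (M.row ∘ a)) := hspan ▸ subset_span (mem_range_self i)
  refine span_mono ?_ hi
  rintro _ ⟨k, rfl⟩
  exact mem_image_of_mem M.row (hat (by simp))

lemma exists_equiv_toRows₂_eq_mul_toRows₁ {ι n κ K : Type*} [Fintype ι] [Fintype n] [Fintype κ]
    [Field K] (M : Matrix ι n K) {m : ℕ} (hrank : M.rank ≤ m)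
    (hcard : Fintype.card ι = m + Fintype.card κ) :
    ∃ (σ : Fin m ⊕ κ ≃ ι) (C : Matrix κ (Fin m) K),
      (M.submatrix σ id).toRows₂ = C * (M.submatrix σ id).toRows₁ := by
  obtain ⟨t, ht, hspan⟩ := M.exists_finset_card_eq_row_mem_span hrank (by omega)
  obtain ⟨σ, hσ⟩ := t.exists_equiv_sum_range_inl ht hcard
  have hcomb : ∀ j, ∃ c : Fin m → K, ∑ k, c k • M.row (σ (.inl k)) = M.row (σ (.inr j)) :=
    fun j => (mem_span_range_iff_exists_fun K).1 <| by
      have := hspan (σ (.inr j))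
      rwa [← hσ, ← range_comp] at this
  choose C hC using hcomb
  refine ⟨σ, of C, ?_⟩
  ext j b
  simpa [mul_apply] using (congrFun (hC j) b).symm

lemma IsSymm.eq_fromRows_mul_toBlocks₁₁_mul_transpose {μ κ R : Type*} [Fintype μ]
    [DecidableEq μ] [CommSemiring R] {Y : Matrix (μ ⊕ κ) (μ ⊕ κ) R} (hY : Y.IsSymm)
    {C : Matrix κ μ R} (hC : Y.toRows₂ = C * Y.toRows₁) :
    Y = fromRows 1 C * Y.toBlocks₁₁ * (fromRows 1 C)ᵀ := by
  have hrows : Y = fromRows 1 C * Y.toRows₁ := by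
    rw [fromRows_mul, Matrix.one_mul, ← hC, fromRows_toRows]
  have hrows_eq_cols : Y.toRows₁ = Y.toCols₁ᵀ := by
    ext i j
    exact hY.apply j (.inl i)
  have hcols : Y.toCols₁ = fromRows 1 C * Y.toBlocks₁₁ :=
    calc Y.toCols₁ = (fromRows 1 C * Y.toRows₁).toCols₁ := by rw [← hrows]
      _ = fromRows 1 C * Y.toBlocks₁₁ := rfl
  have hblock : Y.toBlocks₁₁ᵀ = Y.toBlocks₁₁ := by
    ext i j
    exact hY.apply (.inl i) (.inl j)
  calc Y = fromRows 1 C * Y.toRows₁ := hrows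
    _ = fromRows 1 C * (fromRows 1 C * Y.toBlocks₁₁)ᵀ := by rw [hrows_eq_cols, hcols]
    _ = fromRows 1 C * Y.toBlocks₁₁ * (fromRows 1 C)ᵀ := by
      rw [transpose_mul, hblock, Matrix.mul_assoc]

def ofSym2 {μ R : Type*} (a : Sym2 μ → R) : Matrix μ μ R :=
  of fun k l => a s(k, l)

def symmLowRankParam {ι κ R : Type*} [CommSemiring R] {m : ℕ} (σ : Fin m ⊕ κ ≃ ι)
    (p : (Sym2 (Fin m) → R) × (κ → Fin m → R)) : Matrix ι ι R :=
  reindex σ σ (fromRows 1 (of p.2) * ofSym2 p.1 * (fromRows 1 (of p.2))ᵀ)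

lemma setOf_isSymm_rank_le_subset_iUnion_range {ι κ K : Type*} [Fintype ι] [Fintype κ] [Field K]
    {m : ℕ} (hcard : Fintype.card ι = m + Fintype.card κ) :
    {X : Matrix ι ι K | X.IsSymm ∧ X.rank ≤ m} ⊆
      ⋃ σ : Fin m ⊕ κ ≃ ι, range (symmLowRankParam (R := K) σ) := by
  rintro X ⟨hX, hrank⟩
  obtain ⟨σ, C, hC⟩ := X.exists_equiv_toRows₂_eq_mul_toRows₁ hrank hcard
  have hY : (X.submatrix σ σ).toRows₂ = C * (X.submatrix σ σ).toRows₁ := by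
    ext j b
    simpa [mul_apply] using congrFun (congrFun hC j) (σ b)
  let a : Sym2 (Fin m) → K := Sym2.lift ⟨fun k l => X (σ (.inl k)) (σ (.inl l)),
    fun k l => hX.apply (σ (.inl l)) (σ (.inl k))⟩
  have hblock : ofSym2 a = (X.submatrix σ σ).toBlocks₁₁ := by
    ext k l
    simp [ofSym2, a, toBlocks₁₁]
  refine mem_iUnion.2 ⟨σ, (a, of.symm C), ?_⟩
  rw [symmLowRankParam, hblock, Equiv.apply_symm_apply,
    ← (hX.submatrix σ).eq_fromRows_mul_toBlocks₁₁_mul_transpose hY]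
  ext i j
  simp

section Frobenius

open scoped Matrix.Norms.Frobenius

variable {𝕜 : Type*} [RCLike 𝕜]

lemma frobenius_contDiff_iff {E μ ν : Type*} [NormedAddCommGroup E] [NormedSpace 𝕜 E]
    [Fintype μ] [Fintype ν] {f : E → Matrix μ ν 𝕜} {k : WithTop ℕ∞} :
    ContDiff 𝕜 k f ↔ ∀ i j, ContDiff 𝕜 k fun x => f x i j := by
  rw [← ((ofLinearEquiv 𝕜).symm.toContinuousLinearEquiv).comp_contDiff_iff, contDiff_pi]
  exact forall_congr' fun i => contDiff_pi

lemma contDiff_symmLowRankParam {ι κ : Type*} [Fintype ι] [Fintype κ] {m : ℕ}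
    (σ : Fin m ⊕ κ ≃ ι) {k : WithTop ℕ∞} :
    ContDiff 𝕜 k (symmLowRankParam (R := 𝕜) σ) := by
  have hB : ∀ a l, ContDiff 𝕜 k fun p : (Sym2 (Fin m) → 𝕜) × (κ → Fin m → 𝕜) =>
      fromRows (1 : Matrix (Fin m) (Fin m) 𝕜) (of p.2) a l := by
    rintro (a | a) l
    · exact contDiff_const
    · simp only [fromRows_apply_inr, of_apply]
      fun_prop
  refine frobenius_contDiff_iff.2 fun i j => ?_
  simp only [symmLowRankParam, reindex_apply, submatrix_apply, mul_apply, transpose_apply, ofSym2,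
    of_apply]
  fun_prop

lemma dimH_setOf_isSymm_rank_le {ι : Type*} [Fintype ι] {m k : ℕ}
    (hcard : Fintype.card ι = m + k) :
    dimH {X : Matrix ι ι ℝ | X.IsSymm ∧ X.rank ≤ m} ≤ ((m + 1).choose 2 + k * m : ℕ) := by
  classical
  calc dimH {X : Matrix ι ι ℝ | X.IsSymm ∧ X.rank ≤ m}
      ≤ dimH (⋃ σ : Fin m ⊕ Fin k ≃ ι, range (symmLowRankParam (R := ℝ) σ)) :=
        dimH_mono (setOf_isSymm_rank_le_subset_iUnion_range (by simpa using hcard))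
    _ = ⨆ σ : Fin m ⊕ Fin k ≃ ι, dimH (range (symmLowRankParam (R := ℝ) σ)) := dimH_iUnion _
    _ ≤ ((m + 1).choose 2 + k * m : ℕ) := iSup_le fun σ =>
        (contDiff_symmLowRankParam σ).dimH_range_le.trans_eq <| by
          simp [Sym2.card, Module.finrank_pi_fintype]

lemma intrinsicFrontier_posSemidef_subset_isSymm {n : Type*} [Fintype n] :
    intrinsicFrontier ℝ {Y : Matrix n n ℝ | Y.PosSemidef} ⊆ {Y | Y.IsSymm} := by
  have hclosed : IsClosed {Y : Matrix n n ℝ | Y.IsSymm} :=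
    isClosed_eq continuous_id.matrix_transpose continuous_id
  calc intrinsicFrontier ℝ {Y : Matrix n n ℝ | Y.PosSemidef}
      ⊆ closure {Y : Matrix n n ℝ | Y.PosSemidef} :=
        intrinsicFrontier_subset_frontier.trans frontier_subset_closure
    _ ⊆ {Y | Y.IsSymm} := hclosed.closure_subset_iff.2 fun Y hY => isHermitian_iff_isSymm.1 hY.1

end Frobenius

end Matrix

/-- Matrices of rank at most `n − 2` in the (relative) boundary of the PSD cone
form an `H_{d−1}`-null set, where `d = n(n+1)/2` is the dimension of the PSD
cone; i.e., `rank = n − 1` holds generically on the boundary of `PSD(n)`.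
The matrix space carries the Frobenius (trace inner product) norm. -/
theorem low_rank_boundary_psd_negligible (n : ℕ) (hn : 2 ≤ n) :
    letI : NormedAddCommGroup (Matrix (Fin n) (Fin n) ℝ) :=
      Matrix.frobeniusNormedAddCommGroup
    letI : MeasurableSpace (Matrix (Fin n) (Fin n) ℝ) := borel _
    haveI : @BorelSpace (Matrix (Fin n) (Fin n) ℝ)
      (@UniformSpace.toTopologicalSpace _ PseudoMetricSpace.toUniformSpace) _ := ⟨rfl⟩
    μH[((n * (n + 1) / 2 : ℕ) : ℝ) - 1]
      {X : Matrix (Fin n) (Fin n) ℝ |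
        X ∈ intrinsicFrontier ℝ {Y : Matrix (Fin n) (Fin n) ℝ | Y.PosSemidef} ∧
        X.rank ≤ n - 2} = 0 := by
  obtain ⟨m, rfl⟩ : ∃ m, n = m + 2 := ⟨n - 2, by omega⟩
  let : NormedAddCommGroup (Matrix (Fin (m + 2)) (Fin (m + 2)) ℝ) := frobeniusNormedAddCommGroup
  let : MeasurableSpace (Matrix (Fin (m + 2)) (Fin (m + 2)) ℝ) := borel _
  have hcount : (m + 2) * (m + 2 + 1) / 2 = (m + 1).choose 2 + (2 * m + 3) := by
    rw [Nat.choose_two_right, Nat.add_sub_cancel, ← Nat.add_mul_div_right _ _ two_pos]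
    ring_nf
  have hexp : (((m + 2) * (m + 2 + 1) / 2 : ℕ) : ℝ) - 1
      = (((m + 2) * (m + 2 + 1) / 2 - 1 : ℕ) : ℝ≥0) := by
    rw [NNReal.coe_natCast, Nat.cast_sub (by omega), Nat.cast_one]
  rw [hexp]
  refine measure_mono_null (t := {X | X.IsSymm ∧ X.rank ≤ m})
    (fun X hX => ⟨intrinsicFrontier_posSemidef_subset_isSymm hX.1, hX.2⟩)
    (@hausdorffMeasure_of_dimH_lt _ _ _ ⟨rfl⟩ _ _
      ((dimH_setOf_isSymm_rank_le (k := 2) (by simp)).trans_lt ?_))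
  rw [ENNReal.coe_natCast]
  exact_mod_cast (by omega)
end

section
/- For each s ∈ {−1,+1}ⁿ, the map b ↦ −b bᵀ, restricted to vectors b in the orthant Diag(s)·ℝ₊ⁿ with ‖b‖_∞ = 1, is bi-Lipschitz: it is Lipschitz with constant 2 (domain with ℓ∞ norm, codomain Sym(n) with entrywise max norm), and its inverse is Lipschitz with constant 1. -/
/-- The sup norm on `Fin n → ℝ` is attained. -/
lemma exists_norm_apply_eq_norm {n : ℕ} (hn : 0 < n) (x : Fin n → ℝ) :
    ∃ k, ‖x k‖ = ‖x‖ := by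
  haveI : Nonempty (Fin n) := ⟨⟨0, hn⟩⟩
  have hne : (Finset.univ : Finset (Fin n)).Nonempty := Finset.univ_nonempty
  obtain ⟨k, -, hk⟩ := Finset.exists_mem_eq_sup' hne (fun i => ‖x i‖₊)
  refine ⟨k, le_antisymm (norm_le_pi_norm x k) ?_⟩
  have : ‖x‖₊ ≤ ‖x k‖₊ := by
    rw [Pi.nnnorm_def]
    exact Finset.sup_le fun i _ => hk ▸ Finset.le_sup' (fun j => ‖x j‖₊) (Finset.mem_univ i)
  exact_mod_cast this

/-- On each orthant `Diag(s)·ℝ₊ⁿ`, restricted to the ℓ∞ unit sphere, the map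
`b ↦ −b bᵀ` is bi-Lipschitz (Lipschitz constant 2, inverse Lipschitz constant 1)
from the ℓ∞ norm to the entrywise max norm on matrices.  Here both the domain
norm `‖·‖` on `Fin n → ℝ` and the codomain norm, written as the sup norm of the
function of pairs of indices, are the relevant sup norms. -/
theorem neg_vecMulVec_biLipschitz_on_orthant (n : ℕ)
    (s : Fin n → ℝ) (hs : ∀ i, s i = 1 ∨ s i = -1)
    (x y : Fin n → ℝ)
    (hxs : ∀ i, 0 ≤ s i * x i) (hys : ∀ i, 0 ≤ s i * y i)
    (hx1 : ‖x‖ = 1) (hy1 : ‖y‖ = 1) :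
    ‖(fun p : Fin n × Fin n =>
        (-(x p.1 * x p.2)) - (-(y p.1 * y p.2)))‖ ≤ 2 * ‖x - y‖ ∧
    ‖x - y‖ ≤ ‖(fun p : Fin n × Fin n =>
        (-(x p.1 * x p.2)) - (-(y p.1 * y p.2)))‖ := by
  have hn : 0 < n := by
    by_contra h
    push_neg at h
    interval_cases n
    · rw [Pi.norm_def] at hx1
      simp at hx1
  have hs1 : ∀ i, |s i| = 1 := fun i => by rcases hs i with h | h <;> simp [h]
  have hxle : ∀ i, |x i| ≤ 1 := fun i => hx1 ▸ norm_le_pi_norm x i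
  have hyle : ∀ i, |y i| ≤ 1 := fun i => hy1 ▸ norm_le_pi_norm y i
  have hdle : ∀ i, |x i - y i| ≤ ‖x - y‖ := fun i => by
    simpa using norm_le_pi_norm (x - y) i
  constructor
  · rw [pi_norm_le_iff_of_nonneg (by positivity)]
    intro p
    have h1 := hdle p.1
    have h2 := hdle p.2
    have hx1' := hxle p.1
    have hy2' := hyle p.2
    have : (-(x p.1 * x p.2)) - (-(y p.1 * y p.2))
        = -(x p.1 * (x p.2 - y p.2)) - ((x p.1 - y p.1) * y p.2) := by ring
    rw [Real.norm_eq_abs, this]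
    calc |-(x p.1 * (x p.2 - y p.2)) - (x p.1 - y p.1) * y p.2|
        ≤ |x p.1 * (x p.2 - y p.2)| + |(x p.1 - y p.1) * y p.2| := by
          rw [abs_sub_comm]
          calc _ ≤ |(x p.1 - y p.1) * y p.2| + |-(x p.1 * (x p.2 - y p.2))| :=
                abs_sub _ _
          _ = _ := by rw [abs_neg]; ring
      _ ≤ 1 * ‖x - y‖ + ‖x - y‖ * 1 := by
          rw [abs_mul, abs_mul]
          have e1 := mul_le_mul hx1' h2 (abs_nonneg _) zero_le_one
          have e2 := mul_le_mul h1 hy2' (abs_nonneg _) (norm_nonneg _)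
          linarith
      _ = 2 * ‖x - y‖ := by ring
  · rw [pi_norm_le_iff_of_nonneg (norm_nonneg _)]
    intro i
    simp only [Pi.sub_apply, Real.norm_eq_abs]
    -- key: for the right `k`, `|x i * x k - y i * y k| ≥ |x i - y i|`
    have key : ∀ (u v : Fin n → ℝ), (∀ j, 0 ≤ s j * u j) → (∀ j, 0 ≤ s j * v j) →
        (∀ j, |v j| ≤ 1) → ‖u‖ = 1 → s i * v i ≤ s i * u i →
        |u i - v i| ≤ ‖(fun p : Fin n × Fin n => -(u p.1 * u p.2) - -(v p.1 * v p.2))‖ := by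
      intro u v hu hv hvle hu1 hiuv
      obtain ⟨k, hk⟩ := exists_norm_apply_eq_norm hn u
      rw [hu1] at hk
      have huk : u k = s k := by
        have h1 : |u k| = 1 := hk
        have h2 : |s k| = 1 := hs1 k
        have h0 : 0 ≤ s k * u k := hu k
        rcases abs_eq (by norm_num : (0:ℝ) ≤ 1) |>.mp h1 with h | h <;>
          rcases hs k with h' | h'
        · rw [h, h']
        · exfalso; rw [h', h] at h0; norm_num at h0
        · exfalso; rw [h', h] at h0; norm_num at h0
        · rw [h, h']
      set a := s i * u i with ha
      set b := s i * v i with hb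
      have hb0 : 0 ≤ b := hv i
      have hab : b ≤ a := hiuv
      have ht : s k * v k ≤ 1 := by
        calc s k * v k ≤ |s k * v k| := le_abs_self _
          _ = |s k| * |v k| := abs_mul _ _
          _ = |v k| := by rw [hs1 k, one_mul]
          _ ≤ 1 := hvle k
      have hsi2 : s i * s i = 1 := by rcases hs i with h | h <;> rw [h] <;> norm_num
      have hsk2 : s k * s k = 1 := by rcases hs k with h | h <;> rw [h] <;> norm_num
      have hval : u i * u k - v i * v k = (s i * s k) * (a - b * (s k * v k)) := by
        rw [huk, ha, hb]
        have heq : (s i * s k) * ((s i * u i) - (s i * v i) * (s k * v k))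
            = (s i * s i) * ((u i * s k) - (s k * s k) * (v i * v k)) := by ring
        rw [heq, hsi2, hsk2]; ring
      have hge : |u i * u k - v i * v k| ≥ a - b := by
        rw [hval, abs_mul]
        have : |s i * s k| = 1 := by rw [abs_mul, hs1 i, hs1 k]; norm_num
        rw [this, one_mul]
        have h1 : a - b ≤ a - b * (s k * v k) := by nlinarith
        calc a - b ≤ a - b * (s k * v k) := h1
          _ ≤ |a - b * (s k * v k)| := le_abs_self _
      have habs : |u i - v i| = a - b := by
        have : |u i - v i| = |s i| * |u i - v i| := by rw [hs1 i, one_mul]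
        rw [this, ← abs_mul]
        have : s i * (u i - v i) = a - b := by rw [ha, hb]; ring
        rw [this, abs_of_nonneg (by linarith)]
      calc |u i - v i| = a - b := habs
        _ ≤ |u i * u k - v i * v k| := hge
        _ = ‖(fun p : Fin n × Fin n => -(u p.1 * u p.2) - -(v p.1 * v p.2)) (i, k)‖ := by
            simp only [Real.norm_eq_abs]
            rw [← abs_neg]
            congr 1
            ring
        _ ≤ _ := norm_le_pi_norm
            (fun p : Fin n × Fin n => -(u p.1 * u p.2) - -(v p.1 * v p.2)) (i, k)
    rcases le_total (s i * y i) (s i * x i) with h | h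
    · exact key x y hxs hys hyle hx1 h
    · have hthis := key y x hys hxs hxle hy1 h
      have heq : (fun p : Fin n × Fin n => -(y p.1 * y p.2) - -(x p.1 * x p.2))
          = -(fun p : Fin n × Fin n => -(x p.1 * x p.2) - -(y p.1 * y p.2)) := by
        funext p; simp only [Pi.neg_apply]; ring
      rw [heq, norm_neg] at hthis
      rw [abs_sub_comm]
      exact hthis
end
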